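/- arXiv:2603.04345 — 5 statements merged into one kernel-verified Lean document; each statement's English description precedes it below -/
import Mathlib

section
/- Let φ and φ' be two rules that both satisfy budget additivity. If φ(c,E) = φ'(c,E) for every redistribution problem (c,E) (i.e., every problem with E = C), then φ(c,E) = φ'(c,E) for every problem (c,E) in the full domain. -/
open Finset

/-!  River pollution claims problems (Yang et al. / Martínez & Moreno-Ternero).

Agents are `Fin n`, ordered upstream (agent `0`) to downstream (agent `n-1`).  -/

/-- A rule candidate: for each population size `n` it maps a claims vector and a
budget to a vector of awards. -/
abbrev RuleFun : Type := (n : ℕ) → (Fin n → ℝ) → ℝ → (Fin n → ℝ)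

/-- `(c, E)` is a river pollution (abatement) problem: claims are nonnegative, the
aggregate claim `C = ∑ i, c i` is positive, and `0 ≤ E ≤ C`. -/
def IsProblem {n : ℕ} (c : Fin n → ℝ) (E : ℝ) : Prop :=
  (∀ i, 0 ≤ c i) ∧ 0 < ∑ i, c i ∧ 0 ≤ E ∧ E ≤ ∑ i, c i

/-- A redistribution problem: a problem whose budget equals the aggregate claim. -/
def IsRedistribution {n : ℕ} (c : Fin n → ℝ) (E : ℝ) : Prop :=
  IsProblem c E ∧ E = ∑ i, c i

/-- `φ` is a rule: on every problem it returns a nonnegative allocation exhausting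
the budget. -/
def IsRule (φ : RuleFun) : Prop :=
  ∀ (n : ℕ) (c : Fin n → ℝ) (E : ℝ), IsProblem c E →
    (∀ i, 0 ≤ φ n c E i) ∧ ∑ i, φ n c E i = E

/-- Budget additivity: if the budget comes in two installments `E = E' + E''`, the
allocation for `E` is the sum of the allocations for `E'` and `E''`. -/
def BudgetAdditive (φ : RuleFun) : Prop :=
  ∀ (n : ℕ) (c : Fin n → ℝ) (E E' E'' : ℝ), IsProblem c E →
    0 ≤ E' → 0 ≤ E'' → E = E' + E'' →
    φ n c E = fun i => φ n c E' i + φ n c E'' i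

/-- Scale invariance: rescaling claims and budget by `μ > 0` rescales the allocation. -/
def ScaleInvariant (φ : RuleFun) : Prop :=
  ∀ (n : ℕ) (c : Fin n → ℝ) (E μ : ℝ), IsProblem c E → 0 < μ →
    φ n (fun i => μ * c i) (μ * E) = fun i => μ * φ n c E i

/-- Upstream invariance: in redistribution problems, increasing the claim of agent `i`
does not change the awards of agents located strictly upstream of `i`. -/
def UpstreamInvariant (φ : RuleFun) : Prop :=
  ∀ (n : ℕ) (c d : Fin n → ℝ),
    IsRedistribution c (∑ i, c i) → IsRedistribution d (∑ i, d i) →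
    ∀ i : Fin n, c i < d i → (∀ j, j ≠ i → c j = d j) →
    ∀ k, k < i → φ n c (∑ i, c i) k = φ n d (∑ i, d i) k

/-- The claims vector whose only (single) polluter is agent `i`, with claim `E`. -/
def singleClaim {n : ℕ} (i : Fin n) (E : ℝ) : Fin n → ℝ :=
  fun k => if k = i then E else 0

/-- Equal treatment of equal single polluters: in the redistribution problems whose
claims vector is `E` times a standard basis vector, any two non-terminal single
polluters receive the same award. -/
def EqualTreatmentOfEqualSinglePolluters (φ : RuleFun) : Prop :=
  ∀ (n : ℕ), 2 ≤ n → ∀ E : ℝ, 0 < E → ∀ i j : Fin n,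
    (i : ℕ) < n - 1 → (j : ℕ) < n - 1 →
    φ n (singleClaim i E) E i = φ n (singleClaim j E) E j

/-- Equal treatment of equal claims: agents with equal claims receive equal awards. -/
def EqualTreatmentOfEqualClaims (φ : RuleFun) : Prop :=
  ∀ (n : ℕ) (c : Fin n → ℝ) (E : ℝ), IsProblem c E →
    ∀ i j : Fin n, c i = c j → φ n c E i = φ n c E j

/-- The reduced claims vector obtained when the most upstream agent leaves with
award `x`: the new first agent's claim is `c 1 + (c 0 - x)`, and the remaining
claims are unchanged. -/
def reducedClaims {n : ℕ} (c : Fin (n + 1) → ℝ) (x : ℝ) : Fin n → ℝ :=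
  fun k => c k.succ + if (k : ℕ) = 0 then c 0 - x else 0

/-- Top consistency: in a redistribution problem, if the most upstream agent leaves
with its award (not exceeding its claim), transferring its residual claim to its
successor, and the reduced pair is again a problem (hence a redistribution problem),
then the awards of the remaining agents are unchanged. -/
def TopConsistent (φ : RuleFun) : Prop :=
  ∀ (n : ℕ) (c : Fin (n + 2) → ℝ) (E : ℝ), IsRedistribution c E →
    φ (n + 2) c E 0 ≤ c 0 →
    IsProblem (reducedClaims c (φ (n + 2) c E 0)) (E - φ (n + 2) c E 0) →
    ∀ k : Fin (n + 1),
      φ (n + 2) c E k.succ =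
        φ (n + 1) (reducedClaims c (φ (n + 2) c E 0)) (E - φ (n + 2) c E 0) k

/-- (Full) additivity: the allocation is additive in claims-budget pairs. -/
def AdditiveRule (φ : RuleFun) : Prop :=
  ∀ (n : ℕ) (c d : Fin n → ℝ) (E E' : ℝ),
    IsProblem c E → IsProblem d E' → IsProblem (fun i => c i + d i) (E + E') →
    φ n (fun i => c i + d i) (E + E') = fun i => φ n c E i + φ n d E' i

/-- The elementary redistribution problem `u_n`: only the most upstream agent has a
(positive, unitary) claim; the budget is `1`. -/
def unitClaims (n : ℕ) : Fin n → ℝ := fun k => if (k : ℕ) = 0 then 1 else 0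

/-- Merging/splitting proofness: in the elementary problems `u_n`, merging two
adjacent agents `i, i+1` into a single agent (yielding `u_{n-1}`) does not change
their total award. -/
def MergingSplittingProof (φ : RuleFun) : Prop :=
  ∀ (m : ℕ) (i : Fin (m + 1)),
    φ (m + 2) (unitClaims (m + 2)) 1 i.castSucc
      + φ (m + 2) (unitClaims (m + 2)) 1 i.succ
      = φ (m + 1) (unitClaims (m + 1)) 1 i

/-- The proportional rule `φ^P`. -/
noncomputable def propAlloc : RuleFun :=
  fun _ c E i => c i * (E / ∑ j, c j)

/-- The full transfer rule `φ^FT`: the most downstream agent gets the whole budget. -/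
def ftAlloc : RuleFun :=
  fun n => fun _ E i => if (i : ℕ) = n - 1 then E else 0

/-- The averaging (externality-adjusted proportional) rule `φ^λ`. -/
noncomputable def avgAlloc (lam : ℝ) : RuleFun :=
  fun n c E i => lam * propAlloc n c E i + (1 - lam) * ftAlloc n c E i

/-- The (geometrically) augmented claim of agent `i` under parameter `γ`:
`c i + ∑_{k<i} (1-γ)^(i-k) * c k`. -/
noncomputable def geomShare (γ : ℝ) {n : ℕ} (c : Fin n → ℝ) (i : Fin n) : ℝ :=
  c i + ∑ k ∈ Finset.Iio i, (1 - γ) ^ ((i : ℕ) - (k : ℕ)) * c k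

/-- The geometric rule `φ^γ`: every non-terminal agent gets the fraction `γ` of its
augmented proportional share; the most downstream agent gets its full augmented
proportional share. -/
noncomputable def geomAlloc (γ : ℝ) : RuleFun :=
  fun n c E i =>
    (if (i : ℕ) = n - 1 then 1 else γ) * geomShare γ c i * (E / ∑ j, c j)

/-- A transfer function `Γ : ℝ₊ → ℝ₊` with `0 ≤ Γ(t) ≤ t`. -/
def IsTransferFunction (Γ : ℝ → ℝ) : Prop := ∀ t : ℝ, 0 ≤ t → 0 ≤ Γ t ∧ Γ t ≤ t

/-- `rGammaNat Γ c i = Γ (c i + ∑_{k<i} (c k - rGammaNat Γ c k))`: the recursively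
defined generalized geometric shares (of all non-terminal agents). -/
noncomputable def rGammaNat (Γ : ℝ → ℝ) (c : ℕ → ℝ) : ℕ → ℝ
  | i => Γ (c i + ∑ k : Fin i, (c k - rGammaNat Γ c k))
decreasing_by exact k.isLt

/-- Extension of a claims vector on `Fin n` to `ℕ` (by `0`). -/
def extendClaims {n : ℕ} (c : Fin n → ℝ) : ℕ → ℝ :=
  fun k => if h : k < n then c ⟨k, h⟩ else 0

/-- The shares `r^Γ_i(c)` of the generalized geometric rule: non-terminal agents get
`Γ(c i + ∑_{k<i}(c k − r_k))`, the most downstream agent gets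
`c i + ∑_{k<i}(c k − r_k)`. -/
noncomputable def genGeomShare (Γ : ℝ → ℝ) {n : ℕ} (c : Fin n → ℝ) (i : Fin n) : ℝ :=
  if (i : ℕ) = n - 1 then
    c i + ∑ k : Fin (i : ℕ), (extendClaims c k - rGammaNat Γ (extendClaims c) k)
  else rGammaNat Γ (extendClaims c) i

/-- The generalized geometric rule `φ^Γ`. -/
noncomputable def genGeomAlloc (Γ : ℝ → ℝ) : RuleFun :=
  fun _ c E i => genGeomShare Γ c i * (E / ∑ j, c j)

/-- Lemma 1: if two rules satisfy budget additivity and coincide on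
every redistribution problem, then they coincide on every problem. -/
theorem coincide_of_budgetAdditive_of_coincide_on_redistribution
    (φ φ' : RuleFun) (hφ : IsRule φ) (hφ' : IsRule φ')
    (hadd : BudgetAdditive φ) (hadd' : BudgetAdditive φ')
    (heq : ∀ (n : ℕ) (c : Fin n → ℝ) (E : ℝ), IsRedistribution c E → φ n c E = φ' n c E) :
    ∀ (n : ℕ) (c : Fin n → ℝ) (E : ℝ), IsProblem c E → φ n c E = φ' n c E := by
  intro n c E hE
  obtain ⟨hc, hC, hE0, hEC⟩ := hE
  set C := ∑ i, c i with hCdef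
  have hP : ∀ F : ℝ, 0 ≤ F → F ≤ C → IsProblem c F := fun F h1 h2 => ⟨hc, hC, h1, h2⟩
  funext i
  set ψ : ℝ → ℝ := fun F => φ n c F i - φ' n c F i with hψ
  suffices h : ψ E = 0 by
    have : φ n c E i - φ' n c E i = 0 := h
    linarith
  have hadd2 : ∀ a b : ℝ, 0 ≤ a → 0 ≤ b → a + b ≤ C → ψ (a + b) = ψ a + ψ b := by
    intro a b ha hb hab
    have h1 := hadd n c (a+b) a b (hP _ (by linarith) hab) ha hb rfl
    have h2 := hadd' n c (a+b) a b (hP _ (by linarith) hab) ha hb rfl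
    simp only [hψ, h1, h2]; ring
  have hbound : ∀ F : ℝ, 0 ≤ F → F ≤ C → |ψ F| ≤ C := by
    intro F h1 h2
    obtain ⟨hn1, hs1⟩ := hφ n c F (hP F h1 h2)
    obtain ⟨hn2, hs2⟩ := hφ' n c F (hP F h1 h2)
    have u1 : φ n c F i ≤ F :=
      le_of_le_of_eq (Finset.single_le_sum (fun j _ => hn1 j) (mem_univ i)) hs1
    have u2 : φ' n c F i ≤ F :=
      le_of_le_of_eq (Finset.single_le_sum (fun j _ => hn2 j) (mem_univ i)) hs2
    rw [abs_le]
    constructor <;> simp only [hψ] <;> [linarith [hn1 i]; linarith [hn2 i]]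
  have hψC : ψ C = 0 := by
    have h := heq n c C ⟨hP C hC.le le_rfl, rfl⟩
    simp only [hψ, h, sub_self]
  have hψ0 : ψ 0 = 0 := by
    have := hadd2 0 0 le_rfl le_rfl (by linarith)
    simp at this
    linarith
  have hwrap : ∀ a b : ℝ, 0 ≤ a → a ≤ C → 0 ≤ b → b ≤ C → C ≤ a + b →
      ψ (a + b - C) = ψ a + ψ b := by
    intro a b ha haC hb hbC hab
    have h1 : ψ (a + (C - a)) = ψ a + ψ (C - a) :=
      hadd2 a (C - a) ha (by linarith) (by linarith)
    rw [add_sub_cancel, hψC] at h1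
    have h2 := hadd2 (a + b - C) (C - a) (by linarith) (by linarith) (by linarith)
    have h3 : a + b - C + (C - a) = b := by ring
    rw [h3] at h2
    linarith
  rcases eq_or_lt_of_le hEC with hEeq | hElt
  · rw [hEeq, hψC]
  · set q : ℝ := E / C with hq
    have hq0 : 0 ≤ q := div_nonneg hE0 hC.le
    have hq1 : q < 1 := (div_lt_one hC).mpr hElt
    have hCq : C * q = E := mul_div_cancel₀ E (ne_of_gt hC)
    have key : ∀ m : ℕ, ψ (C * Int.fract ((m : ℝ) * q)) = (m : ℝ) * ψ E := by
      intro m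
      induction m with
      | zero => simp [hψ0]
      | succ m ih =>
        set a : ℝ := Int.fract ((m : ℝ) * q) with hadef
        have ha0 : 0 ≤ a := Int.fract_nonneg _
        have ha1 : a < 1 := Int.fract_lt_one _
        have hsplit : ((m : ℝ) + 1) * q = (⌊(m : ℝ) * q⌋ : ℝ) + (a + q) := by
          rw [hadef, Int.fract]; ring
        have hfr : Int.fract (((m : ℝ) + 1) * q) = Int.fract (a + q) := by
          rw [hsplit, Int.fract_intCast_add]
        rcases lt_or_ge (a + q) 1 with hlt | hge
        · have hfr2 : Int.fract (a + q) = a + q :=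
            Int.fract_eq_self.mpr ⟨by linarith, hlt⟩
          have harg : C * (a + q) = C * a + E := by rw [mul_add, hCq]
          have hsum : C * a + E ≤ C := by nlinarith
          have := hadd2 (C * a) E (by positivity) hE0 hsum
          push_cast
          rw [hfr, hfr2, harg, this, ih]
          ring
        · have hfl : ⌊a + q⌋ = 1 := by
            rw [Int.floor_eq_iff]
            constructor <;> push_cast <;> linarith
          have hfr2 : Int.fract (a + q) = a + q - 1 := by
            rw [Int.fract, hfl]; norm_num
          have harg : C * (a + q - 1) = C * a + E - C := by
            rw [mul_sub, mul_add, hCq]; ring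
          have hge2 : C ≤ C * a + E := by nlinarith
          have := hwrap (C * a) E (by positivity) (by nlinarith) hE0 hElt.le hge2
          push_cast
          rw [hfr, hfr2, harg, this, ih]
          ring
    by_contra hne
    obtain ⟨m, hm⟩ := exists_nat_gt (C / |ψ E|)
    have habs : 0 < |ψ E| := abs_pos.mpr hne
    have h1 : C < (m : ℝ) * |ψ E| := by
      rw [div_lt_iff₀ habs] at hm; linarith
    have h2 : |ψ (C * Int.fract ((m : ℝ) * q))| ≤ C := by
      apply hbound
      · exact mul_nonneg hC.le (Int.fract_nonneg _)
      · nlinarith [Int.fract_lt_one ((m : ℝ) * q), Int.fract_nonneg ((m : ℝ) * q)]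
    rw [key m, abs_mul, abs_of_nonneg (by positivity : (0:ℝ) ≤ (m:ℝ))] at h2
    linarith
end

section
/- A rule satisfies scale invariance, upstream invariance, equal treatment of equal single polluters, top consistency and budget additivity if and only if it is a geometric rule, i.e., there exists γ ∈ [0,1] such that the rule equals φ^γ. -/
open Finset

namespace RiverAux

lemma sum_Iio_fin {n : ℕ} (i : Fin n) (f : Fin n → ℝ) (g : ℕ → ℝ)
    (h : ∀ j (hj : j < n), g j = f ⟨j, hj⟩) :
    ∑ k ∈ Finset.Iio i, f k = ∑ j ∈ Finset.range (i : ℕ), g j := by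
  refine Finset.sum_bij' (fun k _ => (k : ℕ)) (fun j hj => ⟨j, ?_⟩) ?_ ?_ ?_ ?_ ?_
  · simp at hj; omega
  · intro a ha; simp at ha ⊢; omega
  · intro a ha; simp at ha ⊢; exact ha
  · intro a ha; simp
  · intro a ha; simp
  · intro a ha; rw [h a.1 a.isLt]

lemma geomShare_eq (γ : ℝ) {n : ℕ} (c : Fin n → ℝ) (i : Fin n) :
    geomShare γ c i
      = c i + ∑ j ∈ Finset.range (i : ℕ), (1 - γ) ^ ((i : ℕ) - j) * extendClaims c j := by
  rw [geomShare]
  congr 1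
  apply sum_Iio_fin
  intro j hj
  simp [extendClaims, hj]

lemma extend_reduced {n : ℕ} (c : Fin (n + 2) → ℝ) (x : ℝ) (j : ℕ) :
    extendClaims (reducedClaims c x) j
      = extendClaims c (j + 1) + if j = 0 then c 0 - x else 0 := by
  unfold extendClaims reducedClaims
  by_cases hj : j < n + 1
  · simp only [dif_pos hj, dif_pos (by omega : j + 1 < n + 2)]
    congr 1
  · rw [dif_neg hj, dif_neg (by omega), if_neg (by omega)]
    ring

lemma geomShare_scale (γ μ : ℝ) {n : ℕ} (c : Fin n → ℝ) (i : Fin n) :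
    geomShare γ (fun k => μ * c k) i = μ * geomShare γ c i := by
  unfold geomShare
  rw [mul_add, Finset.mul_sum]
  congr 1
  exact Finset.sum_congr rfl (fun k _ => by ring)

lemma sum_reduced {n : ℕ} (c : Fin (n + 2) → ℝ) (x : ℝ) :
    ∑ k, reducedClaims c x k = (∑ i, c i) - x := by
  unfold reducedClaims
  rw [Finset.sum_add_distrib, Fin.sum_univ_succ (f := c)]
  have h1 : ∑ k : Fin (n+1), (if (k : ℕ) = 0 then c 0 - x else 0) = c 0 - x := by
    rw [Fin.sum_univ_succ]
    simp
  rw [h1]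
  ring

lemma sum_singleClaim {n : ℕ} (i : Fin n) (E : ℝ) : ∑ k, singleClaim i E k = E := by
  simp [singleClaim]

end RiverAux
namespace RiverAux

lemma geomShare_reduced (γ : ℝ) {n : ℕ} (c : Fin (n + 2) → ℝ) (k : Fin (n + 1)) :
    geomShare γ (reducedClaims c (γ * c 0)) k = geomShare γ c k.succ := by
  rw [geomShare_eq, geomShare_eq]
  have hv : ((k.succ : Fin (n + 2)) : ℕ) = (k : ℕ) + 1 := Fin.val_succ k
  rw [hv]
  rw [Finset.sum_range_succ']
  have hsum : ∀ j ∈ Finset.range (k : ℕ),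
      (1 - γ) ^ ((k : ℕ) - j) * extendClaims (reducedClaims c (γ * c 0)) j
        = (1 - γ) ^ ((k : ℕ) + 1 - (j + 1)) * extendClaims c (j + 1)
          + (if j = 0 then (1 - γ) ^ ((k : ℕ) + 1) * c 0 else 0) := by
    intro j hj
    rw [extend_reduced]
    rw [Nat.succ_sub_succ]
    by_cases h0 : j = 0
    · subst h0
      simp only [reduceIte, Nat.sub_zero, Nat.add_sub_cancel]
      rw [pow_succ]
      ring
    · simp only [if_neg h0]
      ring
  rw [Finset.sum_congr rfl hsum, Finset.sum_add_distrib]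
  have hif : ∑ j ∈ Finset.range (k : ℕ), (if j = 0 then (1 - γ) ^ ((k : ℕ) + 1) * c 0 else 0)
      = if 0 < (k : ℕ) then (1 - γ) ^ ((k : ℕ) + 1) * c 0 else 0 := by
    by_cases hk : 0 < (k : ℕ)
    · rw [if_pos hk, Finset.sum_ite_eq' (Finset.range (k : ℕ)) 0]
      rw [if_pos (Finset.mem_range.mpr hk)]
    · rw [if_neg hk]
      have : (k : ℕ) = 0 := by omega
      rw [this]
      simp
  rw [hif]
  have hred : reducedClaims c (γ * c 0) k = c k.succ + if (k : ℕ) = 0 then (1 - γ) * c 0 else 0 := by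
    unfold reducedClaims
    congr 1
    by_cases h0 : (k : ℕ) = 0
    · rw [if_pos h0, if_pos h0]; ring
    · rw [if_neg h0, if_neg h0]
  rw [hred]
  have hext0 : extendClaims c 0 = c 0 := by
    unfold extendClaims
    rw [dif_pos (by omega : 0 < n + 2)]
    congr 1
  rw [hext0, Nat.sub_zero]
  by_cases hk : (k : ℕ) = 0
  · rw [if_pos hk, if_neg (by omega)]
    rw [hk]
    simp [pow_one]
  · rw [if_neg hk, if_pos (by omega)]
    ring

end RiverAux
namespace RiverAux

lemma cauchy_linear (f : ℝ → ℝ) (C : ℝ) (hC : 0 < C)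
    (hadd : ∀ a b : ℝ, 0 ≤ a → 0 ≤ b → a + b ≤ C → f (a + b) = f a + f b)
    (hnn : ∀ a : ℝ, 0 ≤ a → a ≤ C → 0 ≤ f a) :
    ∀ E : ℝ, 0 ≤ E → E ≤ C → f E = E / C * f C := by
  have f0 : f 0 = 0 := by
    have h := hadd 0 0 le_rfl le_rfl (by linarith)
    simp at h
    linarith
  have hmul : ∀ (k : ℕ) (t : ℝ), 0 ≤ t → (k : ℝ) * t ≤ C → f ((k : ℝ) * t) = (k : ℝ) * f t := by
    intro k
    induction k with
    | zero => intro t ht hle; simpa using f0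
    | succ k ih =>
      intro t ht hle
      push_cast at hle ⊢
      have hkt : (k : ℝ) * t ≤ C := by nlinarith
      have hknn : (0 : ℝ) ≤ (k : ℝ) * t := by positivity
      have heq : ((k : ℝ) + 1) * t = (k : ℝ) * t + t := by ring
      rw [heq, hadd _ _ hknn ht (by linarith), ih t ht hkt]
      ring
  have hmono : ∀ a b : ℝ, 0 ≤ a → a ≤ b → b ≤ C → f a ≤ f b := by
    intro a b ha hab hbC
    have h1 : f b = f a + f (b - a) := by
      have := hadd a (b - a) ha (by linarith) (by linarith)
      simpa using this
    have := hnn (b - a) (by linarith) (by linarith)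
    linarith
  have hrat : ∀ q : ℚ, 0 ≤ q → (q : ℝ) ≤ 1 → f ((q : ℝ) * C) = (q : ℝ) * f C := by
    intro q hq hq1
    have hden : (0 : ℝ) < (q.den : ℝ) := by positivity
    set u : ℝ := C / (q.den : ℝ) with hu
    have hu0 : 0 ≤ u := by positivity
    have hCu : (q.den : ℝ) * u = C := by rw [hu]; field_simp
    have hfC : f C = (q.den : ℝ) * f u := by
      rw [← hCu, hmul q.den u hu0 (by rw [hCu])]
    have h1 : ((q.num.toNat : ℕ) : ℝ) = ((q.num : ℤ) : ℝ) := by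
      exact_mod_cast congrArg (fun z : ℤ => (z : ℝ)) (Int.toNat_of_nonneg (Rat.num_nonneg.mpr hq))
    have hqden : (q : ℝ) * (q.den : ℝ) = (q.num : ℝ) := by
      rw [Rat.cast_def]; field_simp
    have hnum : (q : ℝ) * C = ((q.num.toNat : ℕ) : ℝ) * u := by
      rw [h1, ← hCu]; rw [← hqden]; ring
    have hqnn : (0 : ℝ) ≤ (q : ℝ) := by exact_mod_cast hq
    have hle : ((q.num.toNat : ℕ) : ℝ) * u ≤ C := by
      rw [← hnum]; nlinarith
    rw [hnum, hmul q.num.toNat u hu0 hle, h1, ← hqden, hfC]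
    ring
  intro E hE0 hEC
  have hfC0 : 0 ≤ f C := hnn C (le_of_lt hC) le_rfl
  have hfE0 : 0 ≤ f E := hnn E hE0 hEC
  have hfEle : f E ≤ f C := hmono E C hE0 hEC le_rfl
  by_contra hne
  rcases lt_or_gt_of_ne hne with hlt | hgt
  · have hfCpos : 0 < f C := by
      rcases eq_or_lt_of_le hfC0 with h | h
      · exfalso; rw [← h] at hlt; simp at hlt; linarith
      · exact h
    have hq' : f E / f C < E / C := by
      rw [div_lt_div_iff₀ hfCpos hC]
      have h' : f E * C < (E / C * f C) * C := mul_lt_mul_of_pos_right hlt hC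
      have h'' : (E / C * f C) * C = E * f C := by field_simp
      linarith
    obtain ⟨q, hq1, hq2⟩ := exists_rat_btwn hq'
    have hq0 : 0 ≤ q := by
      have h0 : (0 : ℝ) ≤ f E / f C := by positivity
      exact_mod_cast le_of_lt (lt_of_le_of_lt h0 hq1)
    have hqle1 : (q : ℝ) ≤ 1 := by
      have hEC1 : E / C ≤ 1 := by rw [div_le_one hC]; exact hEC
      linarith
    have h1 : f ((q : ℝ) * C) = (q : ℝ) * f C := hrat q hq0 hqle1
    have h2 : (q : ℝ) * C ≤ E := by
      rw [lt_div_iff₀ hC] at hq2; linarith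
    have h3 : f ((q : ℝ) * C) ≤ f E := by
      apply hmono _ _ _ h2 hEC
      have : (0:ℝ) ≤ (q:ℝ) := by exact_mod_cast hq0
      positivity
    rw [h1] at h3
    rw [div_lt_iff₀ hfCpos] at hq1
    linarith
  · have hfCpos : 0 < f C := by
      rcases eq_or_lt_of_le hfC0 with h | h
      · exfalso; rw [← h] at hgt; simp at hgt; rw [← h] at hfEle; linarith
      · exact h
    have hq' : E / C < f E / f C := by
      rw [div_lt_div_iff₀ hC hfCpos]
      have h' : (E / C * f C) * C < f E * C := mul_lt_mul_of_pos_right hgt hC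
      have h'' : (E / C * f C) * C = E * f C := by field_simp
      linarith
    obtain ⟨q, hq1, hq2⟩ := exists_rat_btwn hq'
    have hq0 : 0 ≤ q := by
      have h0 : (0 : ℝ) ≤ E / C := by positivity
      exact_mod_cast le_of_lt (lt_of_le_of_lt h0 hq1)
    have hqle1 : (q : ℝ) ≤ 1 := by
      have : f E / f C ≤ 1 := by rw [div_le_one hfCpos]; exact hfEle
      linarith
    have h1 : f ((q : ℝ) * C) = (q : ℝ) * f C := hrat q hq0 hqle1
    have h2 : E ≤ (q : ℝ) * C := by
      rw [div_lt_iff₀ hC] at hq1; linarith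
    have hqC : (q : ℝ) * C ≤ C := by nlinarith
    have h3 : f E ≤ f ((q : ℝ) * C) := hmono _ _ hE0 h2 hqC
    rw [h1] at h3
    rw [lt_div_iff₀ hfCpos] at hq2
    linarith

end RiverAux
namespace RiverAux

lemma budget_linear (φ : RuleFun) (hφ : IsRule φ) (hBA : BudgetAdditive φ)
    {n : ℕ} (c : Fin n → ℝ) (E : ℝ) (h : IsProblem c E) (i : Fin n) :
    φ n c E i = E / (∑ j, c j) * φ n c (∑ j, c j) i := by
  obtain ⟨hc, hC, hE0, hEC⟩ := h
  refine cauchy_linear (fun t => φ n c t i) (∑ j, c j) hC ?_ ?_ E hE0 hEC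
  · intro a b ha hb hab
    have hP : IsProblem c (a + b) := ⟨hc, hC, by linarith, hab⟩
    exact congrFun (hBA n c (a + b) a b hP ha hb rfl) i
  · intro a ha haC
    exact (hφ n c a ⟨hc, hC, ha, haC⟩).1 i

lemma Ugen (φ : RuleFun) (hUI : UpstreamInvariant φ) {m : ℕ} :
    ∀ (k : ℕ) (c d : Fin (m + 1) → ℝ),
      IsRedistribution c (∑ i, c i) → IsRedistribution d (∑ i, d i) →
      c 0 = d 0 → (Finset.univ.filter (fun j => c j ≠ d j)).card ≤ k →
      φ (m + 1) c (∑ i, c i) 0 = φ (m + 1) d (∑ i, d i) 0 := by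
  intro k
  induction k with
  | zero =>
    intro c d hc hd h0 hcard
    have hemp : (Finset.univ.filter (fun j => c j ≠ d j)) = ∅ :=
      Finset.card_eq_zero.mp (Nat.le_zero.mp hcard)
    have : c = d := by
      funext j
      by_contra hne
      have : j ∈ Finset.univ.filter (fun j => c j ≠ d j) := by
        simp [hne]
      rw [hemp] at this
      exact absurd this (Finset.notMem_empty j)
    rw [this]
  | succ k ih =>
    intro c d hc hd h0 hcard
    by_cases hall : ∀ j, c j = d j
    · have : c = d := funext hall
      rw [this]
    · push_neg at hall
      by_cases hex : ∃ j, c j < d j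
      · obtain ⟨j, hj⟩ := hex
        have hj0 : j ≠ 0 := by
          intro h; rw [h, h0] at hj; exact lt_irrefl _ hj
        set c' := Function.update c j (d j) with hc'
        have hsum : ∑ i, c' i = (∑ i, c i) - c j + d j := by
          rw [hc', Finset.sum_update_of_mem (Finset.mem_univ j),
            Finset.sum_sdiff_eq_sub (Finset.singleton_subset_iff.mpr (Finset.mem_univ j))]
          simp
          ring
        have hc'nn : ∀ i, 0 ≤ c' i := by
          intro i
          rcases eq_or_ne i j with rfl | hij
          · rw [hc', Function.update_self]; exact hd.1.1 i
          · rw [hc', Function.update_of_ne hij]; exact hc.1.1 i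
        have hc'pos : 0 < ∑ i, c' i := by
          rw [hsum]; have := hc.1.2.1; linarith
        have hc'red : IsRedistribution c' (∑ i, c' i) :=
          ⟨⟨hc'nn, hc'pos, le_of_lt hc'pos, le_refl _⟩, rfl⟩
        have step1 : φ (m + 1) c (∑ i, c i) 0 = φ (m + 1) c' (∑ i, c' i) 0 := by
          refine hUI (m + 1) c c' hc hc'red j ?_ ?_ 0 (Fin.pos_of_ne_zero hj0)
          · rw [hc', Function.update_self]; exact hj
          · intro j' hj'
            rw [hc', Function.update_of_ne hj']
        have h0' : c' 0 = d 0 := by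
          rw [hc', Function.update_of_ne (Ne.symm hj0)]
          · exact h0
        have hjmem : j ∈ Finset.univ.filter (fun x => c x ≠ d x) := by
          simp [ne_of_lt hj]
        have hsub : Finset.univ.filter (fun x => c' x ≠ d x)
            ⊆ (Finset.univ.filter (fun x => c x ≠ d x)).erase j := by
          intro x hx
          simp only [Finset.mem_filter, Finset.mem_univ, true_and] at hx
          rcases eq_or_ne x j with rfl | hxj
          · exfalso; rw [hc', Function.update_self] at hx; exact hx rfl
          · rw [Finset.mem_erase]
            refine ⟨hxj, ?_⟩
            simp only [Finset.mem_filter, Finset.mem_univ, true_and]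
            rwa [hc', Function.update_of_ne hxj] at hx
        have hcard' : (Finset.univ.filter (fun x => c' x ≠ d x)).card ≤ k := by
          have h1 := Finset.card_le_card hsub
          rw [Finset.card_erase_of_mem hjmem] at h1
          have h2 : 1 ≤ (Finset.univ.filter (fun x => c x ≠ d x)).card :=
            Finset.card_pos.mpr ⟨j, hjmem⟩
          omega
        exact step1.trans (ih c' d hc'red hd h0' hcard')
      · push_neg at hex
        obtain ⟨j, hj⟩ := hall
        have hjlt : d j < c j := lt_of_le_of_ne (hex j) (fun h => hj h.symm)
        have hj0 : j ≠ 0 := by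
          intro h; rw [h] at hj; exact hj h0
        set c' := Function.update c j (d j) with hc'
        have hdle : ∀ i, d i ≤ c' i := by
          intro i
          rcases eq_or_ne i j with rfl | hij
          · rw [hc', Function.update_self]
          · rw [hc', Function.update_of_ne hij]; exact hex i
        have hc'nn : ∀ i, 0 ≤ c' i := by
          intro i
          rcases eq_or_ne i j with rfl | hij
          · rw [hc', Function.update_self]; exact hd.1.1 i
          · rw [hc', Function.update_of_ne hij]; exact hc.1.1 i
        have hc'pos : 0 < ∑ i, c' i := by
          have h1 : ∑ i, d i ≤ ∑ i, c' i := Finset.sum_le_sum (fun i _ => hdle i)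
          have := hd.1.2.1
          linarith
        have hc'red : IsRedistribution c' (∑ i, c' i) :=
          ⟨⟨hc'nn, hc'pos, le_of_lt hc'pos, le_refl _⟩, rfl⟩
        have step1 : φ (m + 1) c' (∑ i, c' i) 0 = φ (m + 1) c (∑ i, c i) 0 := by
          refine hUI (m + 1) c' c hc'red hc j ?_ ?_ 0 (Fin.pos_of_ne_zero hj0)
          · rw [hc', Function.update_self]; exact hjlt
          · intro j' hj'
            rw [hc', Function.update_of_ne hj']
        have h0' : c' 0 = d 0 := by
          rw [hc', Function.update_of_ne (Ne.symm hj0)]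
          exact h0
        have hjmem : j ∈ Finset.univ.filter (fun x => c x ≠ d x) := by
          simp [hj]
        have hsub : Finset.univ.filter (fun x => c' x ≠ d x)
            ⊆ (Finset.univ.filter (fun x => c x ≠ d x)).erase j := by
          intro x hx
          simp only [Finset.mem_filter, Finset.mem_univ, true_and] at hx
          rcases eq_or_ne x j with rfl | hxj
          · exfalso; rw [hc', Function.update_self] at hx; exact hx rfl
          · rw [Finset.mem_erase]
            refine ⟨hxj, ?_⟩
            simp only [Finset.mem_filter, Finset.mem_univ, true_and]
            rwa [hc', Function.update_of_ne hxj] at hx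
        have hcard' : (Finset.univ.filter (fun x => c' x ≠ d x)).card ≤ k := by
          have h1 := Finset.card_le_card hsub
          rw [Finset.card_erase_of_mem hjmem] at h1
          have h2 : 1 ≤ (Finset.univ.filter (fun x => c x ≠ d x)).card :=
            Finset.card_pos.mpr ⟨j, hjmem⟩
          omega
        exact step1.symm.trans (ih c' d hc'red hd h0' hcard')

lemma Ugen' (φ : RuleFun) (hUI : UpstreamInvariant φ) {m : ℕ} (c d : Fin (m + 1) → ℝ)
    (hc : IsRedistribution c (∑ i, c i)) (hd : IsRedistribution d (∑ i, d i))
    (h0 : c 0 = d 0) :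
    φ (m + 1) c (∑ i, c i) 0 = φ (m + 1) d (∑ i, d i) 0 :=
  Ugen φ hUI _ c d hc hd h0 le_rfl

end RiverAux
namespace RiverAux

def auxT (m : ℕ) (t : ℝ) : Fin (m + 2) → ℝ :=
  fun k => if (k : ℕ) = 0 then t else if (k : ℕ) = 1 then 1 else 0

lemma sum_auxT (m : ℕ) (t : ℝ) : ∑ k, auxT m t k = t + 1 := by
  rw [Fin.sum_univ_succ, Fin.sum_univ_succ]
  simp [auxT, Fin.val_succ]

lemma auxT_nonneg (m : ℕ) (t : ℝ) (ht : 0 ≤ t) : ∀ k, 0 ≤ auxT m t k := by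
  intro k
  unfold auxT
  split_ifs <;> norm_num
  exact ht

lemma redis_auxT (m : ℕ) (t : ℝ) (ht : 0 ≤ t) :
    IsRedistribution (auxT m t) (∑ i, auxT m t i) := by
  have hpos : 0 < ∑ i, auxT m t i := by rw [sum_auxT]; linarith
  exact ⟨⟨auxT_nonneg m t ht, hpos, le_of_lt hpos, le_refl _⟩, rfl⟩

lemma redis_single {n : ℕ} (i : Fin n) (E : ℝ) (hE : 0 < E) :
    IsRedistribution (singleClaim i E) E := by
  have hnn : ∀ k, 0 ≤ singleClaim i E k := by
    intro k; unfold singleClaim; split_ifs <;> norm_num; exact le_of_lt hE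
  have hs : ∑ k, singleClaim i E k = E := sum_singleClaim i E
  exact ⟨⟨hnn, by rw [hs]; exact hE, le_of_lt hE, by rw [hs]⟩, hs.symm⟩

/-- `γ_n` in `n = m+2` agents. -/
noncomputable def gammaN (φ : RuleFun) (m : ℕ) : ℝ :=
  φ (m + 2) (singleClaim (0 : Fin (m + 2)) 1) 1 0

lemma phi0_redis (φ : RuleFun) (hUI : UpstreamInvariant φ) (hSI : ScaleInvariant φ)
    {m : ℕ} (c : Fin (m + 2) → ℝ) (hc : IsRedistribution c (∑ i, c i)) :
    φ (m + 2) c (∑ i, c i) 0 = gammaN φ m * c 0 := by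
  set t := c 0 with htdef
  have ht : 0 ≤ t := hc.1.1 0
  -- step 1 : reduce to the `auxT` profile
  have hT0 : auxT m t 0 = t := by simp [auxT]
  have step1 : φ (m + 2) c (∑ i, c i) 0 = φ (m + 2) (auxT m t) (t + 1) 0 := by
    have := Ugen' φ hUI c (auxT m t) hc (redis_auxT m t ht) (by rw [hT0])
    rwa [sum_auxT] at this
  -- homogeneity of `H s := φ (auxT s) (s+1) 0`
  have Hhom : ∀ μ s : ℝ, 0 < μ → 0 ≤ s →
      φ (m + 2) (auxT m (μ * s)) (μ * s + 1) 0 = μ * φ (m + 2) (auxT m s) (s + 1) 0 := by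
    intro μ s hμ hs
    have hP : IsProblem (auxT m s) (s + 1) := by
      have := (redis_auxT m s hs).1
      rwa [sum_auxT] at this
    have h1 := hSI (m + 2) (auxT m s) (s + 1) μ hP hμ
    set w : Fin (m + 2) → ℝ := fun i => μ * auxT m s i with hw
    have hwsum : ∑ i, w i = μ * (s + 1) := by
      rw [hw, ← Finset.mul_sum, sum_auxT]
    have hwred : IsRedistribution w (∑ i, w i) := by
      have hnn : ∀ i, 0 ≤ w i := fun i => mul_nonneg (le_of_lt hμ) (auxT_nonneg m s hs i)
      have hpos : 0 < ∑ i, w i := by rw [hwsum]; nlinarith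
      exact ⟨⟨hnn, hpos, le_of_lt hpos, le_refl _⟩, rfl⟩
    have h2 := Ugen' φ hUI (auxT m (μ * s)) w (redis_auxT m (μ * s) (by positivity)) hwred
      (by simp [auxT, hw])
    rw [sum_auxT, hwsum] at h2
    rw [h2]
    rw [congrFun h1 0]
  have step2 : φ (m + 2) (auxT m t) (t + 1) 0
      = t * φ (m + 2) (auxT m 1) (1 + 1) 0 := by
    rcases eq_or_lt_of_le ht with h | h
    · have h20 : φ (m + 2) (auxT m ((2:ℝ) * 0)) ((2:ℝ) * 0 + 1) 0
          = 2 * φ (m + 2) (auxT m 0) (0 + 1) 0 := Hhom 2 0 (by norm_num) le_rfl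
      norm_num at h20
      rw [← h]
      norm_num
      linarith
    · have := Hhom t 1 h zero_le_one
      rw [mul_one] at this
      exact this
  -- step 3 : `auxT 1` compares with the elementary problem
  have step3 : φ (m + 2) (auxT m 1) (1 + 1) 0 = gammaN φ m := by
    have := Ugen' φ hUI (auxT m 1) (singleClaim (0 : Fin (m + 2)) 1)
      (redis_auxT m 1 zero_le_one)
      (by rw [sum_singleClaim]; exact redis_single 0 1 one_pos)
      (by simp [auxT, singleClaim])
    rw [sum_auxT, sum_singleClaim] at this
    exact this
  rw [step1, step2, step3]
  ring

end RiverAux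
namespace RiverAux

lemma gamma_succ (φ : RuleFun) (hUI : UpstreamInvariant φ) (hSI : ScaleInvariant φ)
    (hET : EqualTreatmentOfEqualSinglePolluters φ) (hTC : TopConsistent φ) (m : ℕ) :
    gammaN φ (m + 1) = gammaN φ m := by
  set e1 : Fin (m + 3) → ℝ := singleClaim (1 : Fin (m + 3)) 1 with he1
  have hred : IsRedistribution e1 1 := redis_single 1 1 one_pos
  have hsum : ∑ i, e1 i = 1 := sum_singleClaim 1 1
  have he10 : e1 0 = 0 := by
    rw [he1]
    unfold singleClaim
    rw [if_neg]
    intro h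
    have := congrArg Fin.val h
    simp at this
  -- agent 0 gets nothing in the `e1` problem
  have h0 : φ (m + 3) e1 1 0 = 0 := by
    have := phi0_redis φ hUI hSI e1 (by rw [← hsum] at hred; exact hred)
    rw [hsum, he10, mul_zero] at this
    exact this
  -- the reduced problem equals the elementary problem on `m+2` agents
  have hredeq : reducedClaims e1 (φ (m + 3) e1 1 0) = singleClaim (0 : Fin (m + 2)) 1 := by
    rw [h0]
    funext k
    unfold reducedClaims singleClaim
    rw [he10]
    have hsv : (Fin.succ k : Fin (m + 3)) = 1 ↔ k = 0 := by
      rw [Fin.ext_iff, Fin.ext_iff]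
      simp [Fin.val_succ]
    by_cases hk : k = (0 : Fin (m + 2))
    · rw [if_pos hk, he1]
      unfold singleClaim
      rw [if_pos (hsv.mpr hk), if_pos (by rw [hk]; simp)]
      ring
    · rw [if_neg hk, he1]
      unfold singleClaim
      rw [if_neg (fun h => hk (hsv.mp h)), if_neg (by
        intro h
        exact hk (Fin.ext (by simpa using h)))]
      ring
  have hprob : IsProblem (reducedClaims e1 (φ (m + 3) e1 1 0)) (1 - φ (m + 3) e1 1 0) := by
    rw [hredeq, h0, sub_zero]
    exact (redis_single (0 : Fin (m + 2)) 1 one_pos).1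
  have htc := hTC (m + 1) e1 1 hred (by rw [h0, he10]) hprob 0
  rw [hredeq, h0, sub_zero, Fin.succ_zero_eq_one] at htc
  -- equal treatment
  have het := hET (m + 3) (by omega) 1 one_pos (1 : Fin (m + 3)) 0
    (by simp) (by simp)
  unfold gammaN
  rw [het.symm, ← he1, htc]

lemma gamma_const (φ : RuleFun) (hUI : UpstreamInvariant φ) (hSI : ScaleInvariant φ)
    (hET : EqualTreatmentOfEqualSinglePolluters φ) (hTC : TopConsistent φ) (m : ℕ) :
    gammaN φ m = gammaN φ 0 := by
  induction m with
  | zero => rfl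
  | succ m ih => rw [gamma_succ φ hUI hSI hET hTC m, ih]

lemma gamma_bounds (φ : RuleFun) (hφ : IsRule φ) :
    0 ≤ gammaN φ 0 ∧ gammaN φ 0 ≤ 1 := by
  have hP : IsProblem (singleClaim (0 : Fin 2) 1) 1 := (redis_single 0 1 one_pos).1
  obtain ⟨hnn, hsum⟩ := hφ 2 (singleClaim (0 : Fin 2) 1) 1 hP
  rw [Fin.sum_univ_two] at hsum
  exact ⟨hnn 0, by have := hnn 1; unfold gammaN; linarith⟩

end RiverAux
namespace RiverAux

lemma geomAlloc_scaleE (γ : ℝ) {n : ℕ} (c : Fin n → ℝ) (E : ℝ) (hC : (∑ j, c j) ≠ 0)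
    (i : Fin n) :
    geomAlloc γ n c E i = E / (∑ j, c j) * geomAlloc γ n c (∑ j, c j) i := by
  unfold geomAlloc
  rw [div_self hC]
  ring

lemma geomShare_at_zero (γ : ℝ) {m : ℕ} (c : Fin (m + 1) → ℝ) :
    geomShare γ c 0 = c 0 := by
  unfold geomShare
  have : Finset.Iio (0 : Fin (m + 1)) = ∅ := by
    ext x; simp [Fin.lt_def]
  rw [this, Finset.sum_empty, add_zero]

lemma redis_geom (φ : RuleFun) (hφ : IsRule φ) (hUI : UpstreamInvariant φ)
    (hSI : ScaleInvariant φ) (hET : EqualTreatmentOfEqualSinglePolluters φ)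
    (hTC : TopConsistent φ) :
    ∀ (n : ℕ) (c : Fin n → ℝ), IsRedistribution c (∑ i, c i) →
      ∀ i, φ n c (∑ i, c i) i = geomAlloc (gammaN φ 0) n c (∑ i, c i) i := by
  set γ := gammaN φ 0 with hγdef
  have hγ0 : 0 ≤ γ := (gamma_bounds φ hφ).1
  have hγ1 : γ ≤ 1 := (gamma_bounds φ hφ).2
  intro n
  induction n with
  | zero => intro c hc i; exact absurd i.isLt (by omega)
  | succ n ih =>
    intro c hc i
    match n, ih with
    | 0, _ =>
      -- single agent
      have hsum := (hφ 1 c (∑ j, c j) hc.1).2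
      rw [Fin.sum_univ_one] at hsum
      have hi : i = 0 := Fin.ext (by omega)
      subst hi
      have hC : (0:ℝ) < ∑ j, c j := hc.1.2.1
      have hC1 : ∑ j, c j = c 0 := Fin.sum_univ_one c
      unfold geomAlloc
      rw [hsum, geomShare_at_zero, if_pos (by simp), div_self (ne_of_gt hC), one_mul, mul_one]
      rw [hC1]
    | Nat.succ m, ih =>
      -- population m + 2
      have hγm : gammaN φ m = γ := gamma_const φ hUI hSI hET hTC m
      have hC : (0:ℝ) < ∑ j, c j := hc.1.2.1
      have hphi0 : φ (m + 2) c (∑ j, c j) 0 = γ * c 0 := by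
        rw [phi0_redis φ hUI hSI c hc, hγm]
      have hc0 : 0 ≤ c 0 := hc.1.1 0
      have hc0C : c 0 ≤ ∑ j, c j :=
        Finset.single_le_sum (fun j _ => hc.1.1 j) (Finset.mem_univ 0)
      rcases Fin.eq_zero_or_eq_succ i with rfl | ⟨k, rfl⟩
      · rw [hphi0]
        unfold geomAlloc
        rw [if_neg (by simp), geomShare_at_zero, div_self (ne_of_gt hC)]
        ring
      · set x := γ * c 0 with hxdef
        have hx0 : 0 ≤ x := mul_nonneg hγ0 hc0
        have hxle : x ≤ c 0 := by nlinarith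
        have hsumred : ∑ j, reducedClaims c x j = (∑ j, c j) - x := sum_reduced c x
        have hrednn : ∀ j, 0 ≤ reducedClaims c x j := by
          intro j
          unfold reducedClaims
          split_ifs with h
          · have := hc.1.1 j.succ; linarith
          · have := hc.1.1 j.succ; linarith
        by_cases hpos : 0 < (∑ j, c j) - x
        · have hprob : IsProblem (reducedClaims c x) ((∑ j, c j) - x) :=
            ⟨hrednn, by rw [hsumred]; exact hpos, le_of_lt hpos, le_of_eq hsumred.symm⟩
          have hprob' : IsProblem (reducedClaims c (φ (m + 2) c (∑ j, c j) 0))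
              ((∑ j, c j) - φ (m + 2) c (∑ j, c j) 0) := by
            rw [hphi0]; exact hprob
          have htc := hTC m c (∑ j, c j) hc (by rw [hphi0]; exact hxle) hprob' k
          rw [hphi0] at htc
          have hredred : IsRedistribution (reducedClaims c x) (∑ j, reducedClaims c x j) :=
            ⟨⟨hrednn, by rw [hsumred]; exact hpos, by rw [hsumred]; linarith, le_refl _⟩, rfl⟩
          have hih := ih (reducedClaims c x) hredred k
          rw [hsumred] at hih
          rw [htc, hih]
          -- algebra : transfer the geometric formula through the reduction
          unfold geomAlloc
          rw [hsumred, div_self (ne_of_gt hpos), div_self (ne_of_gt hC)]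
          have hcoef : ((k : ℕ) = m + 1 - 1) ↔ (((Fin.succ k : Fin (m + 2)) : ℕ) = m + 2 - 1) := by
            rw [Fin.val_succ]
            omega
          rw [geomShare_reduced γ c k]
          by_cases hk : (k : ℕ) = m + 1 - 1
          · rw [if_pos hk, if_pos (hcoef.mp hk)]
          · rw [if_neg hk, if_neg (fun h => hk (hcoef.mpr h))]
        · -- degenerate case : γ = 1 and the first agent owns everything
          have hxC : x = ∑ j, c j := by
            have h1 : (∑ j, c j) ≤ x := by linarith
            linarith
          have hc0eq : c 0 = ∑ j, c j := by linarith
          have hγeq : γ = 1 := by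
            have hc0pos : 0 < c 0 := by linarith
            have : γ * c 0 = 1 * c 0 := by rw [one_mul]; linarith
            exact mul_right_cancel₀ (ne_of_gt hc0pos) this
          -- all downstream claims vanish
          have hsucc_sum : ∑ j : Fin (m + 1), c j.succ = 0 := by
            have := Fin.sum_univ_succ c
            linarith
          have hcsucc : ∀ j : Fin (m + 1), c j.succ = 0 := by
            have := (Finset.sum_eq_zero_iff_of_nonneg
              (fun j _ => hc.1.1 (Fin.succ j))).mp hsucc_sum
            intro j; exact this j (Finset.mem_univ j)
          -- φ gives zero to all downstream agents
          have hsumφ := (hφ (m + 2) c (∑ j, c j) hc.1).2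
          have hnnφ := (hφ (m + 2) c (∑ j, c j) hc.1).1
          have hφsucc_sum : ∑ j : Fin (m + 1), φ (m + 2) c (∑ j, c j) j.succ = 0 := by
            have h1 := Fin.sum_univ_succ (fun j => φ (m + 2) c (∑ j, c j) j)
            rw [hsumφ] at h1  -- careful
            rw [hphi0] at h1
            have : γ * c 0 = ∑ j, c j := by rw [← hxdef]; exact hxC
            linarith
          have hφzero : φ (m + 2) c (∑ j, c j) (Fin.succ k) = 0 := by
            have := (Finset.sum_eq_zero_iff_of_nonneg
              (fun j _ => hnnφ (Fin.succ j))).mp hφsucc_sum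
            exact this k (Finset.mem_univ k)
          rw [hφzero]
          -- geometric side also vanishes
          unfold geomAlloc
          have hshare : geomShare γ c (Fin.succ k) = 0 := by
            unfold geomShare
            rw [hcsucc k]
            rw [Finset.sum_eq_zero, add_zero]
            intro j hj
            rw [hγeq]
            have hjlt : j < Fin.succ k := Finset.mem_Iio.mp hj
            have hj2 : (j : ℕ) < (k : ℕ) + 1 := by
              have h := (Fin.lt_def).mp hjlt
              rwa [Fin.val_succ] at h
            rw [sub_self, zero_pow (by rw [Fin.val_succ]; omega)]
            ring
          rw [hshare]
          ring

lemma forward_eq (φ : RuleFun) (hφ : IsRule φ) (hUI : UpstreamInvariant φ)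
    (hSI : ScaleInvariant φ) (hET : EqualTreatmentOfEqualSinglePolluters φ)
    (hTC : TopConsistent φ) (hBA : BudgetAdditive φ) :
    ∀ (n : ℕ) (c : Fin n → ℝ) (E : ℝ), IsProblem c E →
      φ n c E = geomAlloc (gammaN φ 0) n c E := by
  intro n c E hP
  funext i
  have hC : (0:ℝ) < ∑ j, c j := hP.2.1
  have hred : IsRedistribution c (∑ j, c j) :=
    ⟨⟨hP.1, hC, le_of_lt hC, le_refl _⟩, rfl⟩
  rw [budget_linear φ hφ hBA c E hP i, redis_geom φ hφ hUI hSI hET hTC n c hred i,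
    ← geomAlloc_scaleE (gammaN φ 0) c E (ne_of_gt hC) i]

end RiverAux
namespace RiverAux

section Backward

variable (φ : RuleFun) (γ : ℝ)

lemma geomShare_single {n : ℕ} (i : Fin n) (E : ℝ) :
    geomShare γ (singleClaim i E) i = E := by
  unfold geomShare singleClaim
  rw [if_pos rfl, Finset.sum_eq_zero, add_zero]
  intro j hj
  rw [if_neg (ne_of_lt (Finset.mem_Iio.mp hj))]
  ring

variable (hmain : ∀ (n : ℕ) (c : Fin n → ℝ) (E : ℝ), IsProblem c E →
    φ n c E = geomAlloc γ n c E)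

include hmain

lemma bw_scale : ScaleInvariant φ := by
  intro n c E μ hP hμ
  have hC : (0:ℝ) < ∑ j, c j := hP.2.1
  have hms : ∑ j, μ * c j = μ * ∑ j, c j := (Finset.mul_sum _ _ _).symm
  have hP' : IsProblem (fun i => μ * c i) (μ * E) := by
    refine ⟨fun i => mul_nonneg (le_of_lt hμ) (hP.1 i), ?_, ?_, ?_⟩
    · rw [hms]; exact mul_pos hμ hC
    · exact mul_nonneg (le_of_lt hμ) hP.2.2.1
    · rw [hms]; exact mul_le_mul_of_nonneg_left hP.2.2.2 (le_of_lt hμ)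
  rw [hmain n c E hP, hmain n _ _ hP']
  funext i
  unfold geomAlloc
  rw [geomShare_scale, hms, mul_div_mul_left _ _ (ne_of_gt hμ)]
  ring

lemma bw_upstream : UpstreamInvariant φ := by
  intro n c d hc hd i hlt hagree k hki
  rw [hmain n c _ hc.1, hmain n d _ hd.1]
  unfold geomAlloc
  rw [div_self (ne_of_gt hc.1.2.1), div_self (ne_of_gt hd.1.2.1)]
  have hshare : geomShare γ c k = geomShare γ d k := by
    unfold geomShare
    rw [hagree k (ne_of_lt hki)]
    congr 1
    apply Finset.sum_congr rfl
    intro j hj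
    rw [hagree j (ne_of_lt (lt_trans (Finset.mem_Iio.mp hj) hki))]
  rw [hshare]

lemma bw_etesp : EqualTreatmentOfEqualSinglePolluters φ := by
  intro n hn E hE i j hi hj
  rw [hmain n _ _ (redis_single i E hE).1, hmain n _ _ (redis_single j E hE).1]
  unfold geomAlloc
  rw [sum_singleClaim, sum_singleClaim, geomShare_single, geomShare_single]
  rw [if_neg (by omega), if_neg (by omega)]

lemma bw_topcons : TopConsistent φ := by
  intro n c E hred hle hprob k
  have hP := hred.1
  have hE : E = ∑ j, c j := hred.2
  have hC : (0:ℝ) < ∑ j, c j := hP.2.1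
  have hx : φ (n + 2) c E 0 = γ * c 0 := by
    rw [hmain _ _ _ hP]
    unfold geomAlloc
    rw [if_neg (by simp), geomShare_at_zero, hE, div_self (ne_of_gt hC)]
    ring
  rw [hx] at hprob ⊢
  have hsumred : ∑ j, reducedClaims c (γ * c 0) j = (∑ j, c j) - γ * c 0 :=
    sum_reduced c (γ * c 0)
  have hCred : (0:ℝ) < ∑ j, reducedClaims c (γ * c 0) j := hprob.2.1
  have hEx : E - γ * c 0 = ∑ j, reducedClaims c (γ * c 0) j := by
    rw [hsumred, hE]
  rw [hmain _ _ _ hP, hmain _ _ _ hprob]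
  unfold geomAlloc
  rw [hEx, div_self (ne_of_gt hCred), hE, div_self (ne_of_gt hC)]
  rw [geomShare_reduced γ c k]
  have hcoef : ((k : ℕ) = n + 1 - 1) ↔ (((Fin.succ k : Fin (n + 2)) : ℕ) = n + 2 - 1) := by
    rw [Fin.val_succ]
    omega
  by_cases hk : (k : ℕ) = n + 1 - 1
  · rw [if_pos hk, if_pos (hcoef.mp hk)]
  · rw [if_neg hk, if_neg (fun h => hk (hcoef.mpr h))]

lemma bw_budget : BudgetAdditive φ := by
  intro n c E E' E'' hP hE' hE'' hsum
  have hP' : IsProblem c E' := ⟨hP.1, hP.2.1, hE', by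
    have := hP.2.2.2; linarith⟩
  have hP'' : IsProblem c E'' := ⟨hP.1, hP.2.1, hE'', by
    have := hP.2.2.2; linarith⟩
  rw [hmain n c E hP, hmain n c E' hP', hmain n c E'' hP'']
  funext i
  unfold geomAlloc
  rw [hsum, add_div]
  ring

end Backward

end RiverAux
/-- Theorem 1: a rule satisfies scale invariance, upstream invariance,
equal treatment of equal single polluters, top consistency and budget additivity iff it
is a geometric rule `φ^γ` for some `γ ∈ [0,1]`. -/
theorem geometric_characterization (φ : RuleFun) (hφ : IsRule φ) :
    (ScaleInvariant φ ∧ UpstreamInvariant φ ∧ EqualTreatmentOfEqualSinglePolluters φ ∧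
        TopConsistent φ ∧ BudgetAdditive φ) ↔
      ∃ γ ∈ Set.Icc (0 : ℝ) 1,
        ∀ (n : ℕ) (c : Fin n → ℝ) (E : ℝ), IsProblem c E → φ n c E = geomAlloc γ n c E := by
  constructor
  · rintro ⟨hSI, hUI, hET, hTC, hBA⟩
    exact ⟨RiverAux.gammaN φ 0,
      Set.mem_Icc.mpr ⟨(RiverAux.gamma_bounds φ hφ).1, (RiverAux.gamma_bounds φ hφ).2⟩,
      RiverAux.forward_eq φ hφ hUI hSI hET hTC hBA⟩
  · rintro ⟨γ, _, hmain⟩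
    exact ⟨RiverAux.bw_scale φ γ hmain, RiverAux.bw_upstream φ γ hmain,
      RiverAux.bw_etesp φ γ hmain, RiverAux.bw_topcons φ γ hmain,
      RiverAux.bw_budget φ γ hmain⟩
end

section
/- A rule satisfies upstream invariance, equal treatment of equal single polluters, top consistency and budget additivity if and only if it is a generalized geometric rule, i.e., there exists a function Γ: ℝ_+ → ℝ_+ with 0 ≤ Γ(t) ≤ t for all t such that the rule equals φ^Γ. -/
open Finset

section Helpers

variable (Γ : ℝ → ℝ)

/-- The "stock" available to agent `i`. -/
noncomputable def Ssum (c : ℕ → ℝ) (i : ℕ) : ℝ :=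
  c i + ∑ k : Fin i, (c k - rGammaNat Γ c k)

lemma rGammaNat_eq (c : ℕ → ℝ) (i : ℕ) : rGammaNat Γ c i = Γ (Ssum Γ c i) := by
  rw [rGammaNat]; rfl

lemma Ssum_zero (c : ℕ → ℝ) : Ssum Γ c 0 = c 0 := by
  simp [Ssum]

lemma Ssum_succ (c : ℕ → ℝ) (i : ℕ) :
    Ssum Γ c (i + 1) = c (i + 1) + Ssum Γ c i - rGammaNat Γ c i := by
  unfold Ssum
  rw [Fin.sum_univ_castSucc]
  simp [Fin.coe_castSucc, Fin.val_last]
  ring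

lemma Ssum_congr (c d : ℕ → ℝ) : ∀ i, (∀ j, j ≤ i → c j = d j) → Ssum Γ c i = Ssum Γ d i := by
  intro i
  induction i using Nat.strong_induction_on with
  | _ i ih =>
    intro h
    unfold Ssum
    rw [h i le_rfl]
    congr 1
    apply Finset.sum_congr rfl
    intro k _
    rw [h k (le_of_lt k.isLt), rGammaNat_eq, rGammaNat_eq,
      ih k k.isLt (fun j hj => h j (le_of_lt (lt_of_le_of_lt hj k.isLt)))]

lemma rGammaNat_congr (c d : ℕ → ℝ) (i : ℕ) (h : ∀ j, j ≤ i → c j = d j) :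
    rGammaNat Γ c i = rGammaNat Γ d i := by
  rw [rGammaNat_eq, rGammaNat_eq, Ssum_congr Γ c d i h]

/-- Shift lemma on ℕ-indexed claims. -/
lemma Ssum_shift (c : ℕ → ℝ) (x : ℝ) (hx : x = rGammaNat Γ c 0) :
    ∀ k, Ssum Γ (fun j => c (j + 1) + if j = 0 then c 0 - x else 0) k
      = Ssum Γ c (k + 1) := by
  intro k
  induction k with
  | zero =>
    rw [Ssum_zero, Ssum_succ, Ssum_zero, hx]
    simp; ring
  | succ k ih =>
    have h1 : rGammaNat Γ (fun j => c (j + 1) + if j = 0 then c 0 - x else 0) k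
        = rGammaNat Γ c (k + 1) := by
      rw [rGammaNat_eq, rGammaNat_eq, ih]
    rw [Ssum_succ, Ssum_succ, ih, h1]
    simp

lemma rGammaNat_shift (c : ℕ → ℝ) (x : ℝ) (hx : x = rGammaNat Γ c 0) (k : ℕ) :
    rGammaNat Γ (fun j => c (j + 1) + if j = 0 then c 0 - x else 0) k
      = rGammaNat Γ c (k + 1) := by
  rw [rGammaNat_eq, rGammaNat_eq, Ssum_shift Γ c x hx]

end Helpers
section Helpers2

variable {Γ : ℝ → ℝ}

lemma Gamma_zero (hΓ : IsTransferFunction Γ) : Γ 0 = 0 :=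
  le_antisymm (hΓ 0 le_rfl).2 (hΓ 0 le_rfl).1

lemma Ssum_nonneg (hΓ : IsTransferFunction Γ) (c : ℕ → ℝ) (hc : ∀ j, 0 ≤ c j) :
    ∀ i, 0 ≤ Ssum Γ c i := by
  intro i
  induction i with
  | zero => rw [Ssum_zero]; exact hc 0
  | succ i ih =>
    rw [Ssum_succ, rGammaNat_eq]
    have := (hΓ _ ih).2
    have := hc (i + 1)
    linarith

lemma Ssum_of_zeros (hΓ : IsTransferFunction Γ) (c : ℕ → ℝ) (i : ℕ)
    (hc : ∀ j, j < i → c j = 0) : ∀ k, k ≤ i → Ssum Γ c k = c k := by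
  intro k
  induction k with
  | zero => intro _; exact Ssum_zero Γ c
  | succ k ih =>
    intro hk
    have hk' : k ≤ i := le_of_lt (lt_of_lt_of_le (Nat.lt_succ_self k) hk)
    rw [Ssum_succ, rGammaNat_eq, ih hk', hc k (lt_of_lt_of_le (Nat.lt_succ_self k) hk)]
    rw [Gamma_zero hΓ]
    ring

lemma extendClaims_coe {n : ℕ} (c : Fin n → ℝ) (i : Fin n) :
    extendClaims c (i : ℕ) = c i := by
  simp [extendClaims, i.isLt]

lemma genGeomShare_eq {n : ℕ} (c : Fin n → ℝ) (i : Fin n) :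
    genGeomShare Γ c i = if (i : ℕ) = n - 1 then Ssum Γ (extendClaims c) i
      else rGammaNat Γ (extendClaims c) i := by
  unfold genGeomShare
  split_ifs with h
  · unfold Ssum; rw [extendClaims_coe]
  · rfl

lemma sum_reducedClaims {n : ℕ} (c : Fin (n + 2) → ℝ) (x : ℝ) :
    ∑ k, reducedClaims c x k = (∑ k, c k) - x := by
  unfold reducedClaims
  rw [Finset.sum_add_distrib, Fin.sum_univ_succ (f := c)]
  have h : (∑ k : Fin (n + 1), if (k : ℕ) = 0 then c 0 - x else 0) = c 0 - x := by
    rw [Fin.sum_univ_succ]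
    simp
  rw [h]
  ring

lemma extendClaims_reduced {n : ℕ} (c : Fin (n + 2) → ℝ) (x : ℝ) :
    extendClaims (reducedClaims c x)
      = fun j => extendClaims c (j + 1) + if j = 0 then extendClaims c 0 - x else 0 := by
  funext j
  by_cases hj : j < n + 1
  · have h2 : j + 1 < n + 2 := by omega
    simp only [extendClaims, reducedClaims, dif_pos hj, dif_pos h2,
      dif_pos (Nat.succ_pos (n + 1))]
    simp [Fin.succ_mk, Fin.mk_zero]
  · have h2 : ¬ (j + 1 < n + 2) := by omega
    have hj0 : j ≠ 0 := by omega
    simp [extendClaims, dif_neg hj, dif_neg h2, hj0, show ¬ j ≤ n by omega]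

lemma genGeomShare_shift {n : ℕ} (c : Fin (n + 2) → ℝ) (x : ℝ) (hx : x = Γ (c 0))
    (k : Fin (n + 1)) :
    genGeomShare Γ (reducedClaims c x) k = genGeomShare Γ c k.succ := by
  have hx0 : x = rGammaNat Γ (extendClaims c) 0 := by
    rw [rGammaNat_eq, Ssum_zero, hx]
    simp [extendClaims, Fin.mk_zero]
  have hD := extendClaims_reduced c x
  have hS : Ssum Γ (extendClaims (reducedClaims c x)) k = Ssum Γ (extendClaims c) ((k : ℕ) + 1) := by
    rw [hD]
    exact Ssum_shift Γ (extendClaims c) x hx0 k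
  have hr : rGammaNat Γ (extendClaims (reducedClaims c x)) k
      = rGammaNat Γ (extendClaims c) ((k : ℕ) + 1) := by
    rw [hD]
    exact rGammaNat_shift Γ (extendClaims c) x hx0 k
  rw [genGeomShare_eq, genGeomShare_eq]
  have hsucc : ((k.succ : Fin (n + 2)) : ℕ) = (k : ℕ) + 1 := rfl
  by_cases hk : (k : ℕ) = n
  · rw [if_pos (by omega : (k : ℕ) = n + 1 - 1), if_pos (by rw [hsucc]; omega)]
    rw [hS, hsucc]
  · rw [if_neg (by omega : ¬ (k : ℕ) = n + 1 - 1), if_neg (by rw [hsucc]; omega)]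
    rw [hr, hsucc]

end Helpers2
section Backward

variable {Γ : ℝ → ℝ}

lemma sum_singleClaim {n : ℕ} (i : Fin n) (E : ℝ) : ∑ k, singleClaim i E k = E := by
  simp [singleClaim]

lemma isProblem_singleClaim {n : ℕ} (i : Fin n) (E : ℝ) (hE : 0 < E) :
    IsProblem (singleClaim i E) E := by
  refine ⟨fun k => ?_, ?_, le_of_lt hE, ?_⟩
  · unfold singleClaim; split_ifs <;> [exact le_of_lt hE; exact le_rfl]
  · rw [sum_singleClaim]; exact hE
  · rw [sum_singleClaim]

lemma extendClaims_singleClaim_lt {n : ℕ} (i : Fin n) (E : ℝ) (j : ℕ) (hj : j < (i : ℕ)) :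
    extendClaims (singleClaim i E) j = 0 := by
  have hjn : j < n := lt_trans hj i.isLt
  simp only [extendClaims, dif_pos hjn, singleClaim]
  rw [if_neg]
  intro h
  rw [Fin.ext_iff] at h
  simp at h
  omega

lemma genGeomShare_single (hΓ : IsTransferFunction Γ) {n : ℕ} (i : Fin n) (E : ℝ)
    (hi : (i : ℕ) < n - 1) :
    genGeomShare Γ (singleClaim i E) i = Γ E := by
  rw [genGeomShare_eq, if_neg (by omega), rGammaNat_eq,
    Ssum_of_zeros hΓ _ (i : ℕ) (extendClaims_singleClaim_lt i E) _ le_rfl,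
    extendClaims_coe]
  simp [singleClaim]

lemma genGeomShare_zero (Γ : ℝ → ℝ) {n : ℕ} (c : Fin (n + 2) → ℝ) :
    genGeomShare Γ c 0 = Γ (c 0) := by
  rw [genGeomShare_eq]
  have h0 : ((0 : Fin (n + 2)) : ℕ) = 0 := rfl
  rw [if_neg (by omega), rGammaNat_eq]
  rw [h0, Ssum_zero]
  have he : extendClaims c 0 = c 0 := by simp [extendClaims, Fin.mk_zero]
  rw [he]

lemma backward_dir (φ : RuleFun) (hφ : IsRule φ) (Γ : ℝ → ℝ) (hΓ : IsTransferFunction Γ)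
    (heq : ∀ (n : ℕ) (c : Fin n → ℝ) (E : ℝ), IsProblem c E → φ n c E = genGeomAlloc Γ n c E) :
    UpstreamInvariant φ ∧ EqualTreatmentOfEqualSinglePolluters φ ∧
      TopConsistent φ ∧ BudgetAdditive φ := by
  refine ⟨?_, ?_, ?_, ?_⟩
  · -- UpstreamInvariant
    intro n c d hc hd i hlt hagree k hk
    have hCc : (0:ℝ) < ∑ j, c j := hc.1.2.1
    have hCd : (0:ℝ) < ∑ j, d j := hd.1.2.1
    rw [heq n c _ hc.1, heq n d _ hd.1]
    unfold genGeomAlloc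
    rw [div_self (ne_of_gt hCc), div_self (ne_of_gt hCd), mul_one, mul_one]
    have hki : (k : ℕ) < (i : ℕ) := hk
    have hkn : (k : ℕ) ≠ n - 1 := by have := i.isLt; omega
    rw [genGeomShare_eq, genGeomShare_eq, if_neg hkn, if_neg hkn]
    apply rGammaNat_congr
    intro j hj
    have hjn : j < n := lt_of_le_of_lt hj k.isLt
    simp only [extendClaims, dif_pos hjn]
    exact hagree ⟨j, hjn⟩ (by
      intro h
      rw [Fin.ext_iff] at h
      simp at h
      omega)
  · -- Equal treatment of equal single polluters
    intro n hn E hE i j hi hj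
    rw [heq n _ E (isProblem_singleClaim i E hE), heq n _ E (isProblem_singleClaim j E hE)]
    unfold genGeomAlloc
    rw [sum_singleClaim, sum_singleClaim, genGeomShare_single hΓ i E hi,
      genGeomShare_single hΓ j E hj]
  · -- Top consistency
    intro n c E hred hle hprob k
    have hC : (0:ℝ) < ∑ j, c j := hred.1.2.1
    have hE : E = ∑ j, c j := hred.2
    set x := φ (n + 2) c E 0 with hxdef
    have hx : x = Γ (c 0) := by
      rw [hxdef, heq _ c E hred.1]
      unfold genGeomAlloc
      rw [← hE, div_self (ne_of_gt (hE ▸ hC)), mul_one, genGeomShare_zero]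
    have hsumred : ∑ j, reducedClaims c x j = E - x := by
      rw [sum_reducedClaims, ← hE]
    have hpos : (0:ℝ) < E - x := by
      have := hprob.2.1
      rwa [hsumred] at this
    rw [heq _ c E hred.1, heq _ _ _ hprob]
    unfold genGeomAlloc
    rw [hsumred, ← hE, div_self (ne_of_gt (hE ▸ hC)), div_self (ne_of_gt hpos),
      mul_one, mul_one]
    exact (genGeomShare_shift c x hx k).symm
  · -- Budget additivity
    intro n c E E' E'' hP hE' hE'' hsum
    have hC : (0:ℝ) < ∑ j, c j := hP.2.1
    have hP' : IsProblem c E' := ⟨hP.1, hP.2.1, hE', by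
      have := hP.2.2.2; linarith⟩
    have hP'' : IsProblem c E'' := ⟨hP.1, hP.2.1, hE'', by
      have := hP.2.2.2; linarith⟩
    funext i
    rw [heq n c E hP, heq n c E' hP', heq n c E'' hP'']
    unfold genGeomAlloc
    rw [hsum, add_div, mul_add]

end Backward
section BudgetLinear

lemma budget_linear (φ : RuleFun) (hφ : IsRule φ) (hBA : BudgetAdditive φ)
    {n : ℕ} (c : Fin n → ℝ) (E : ℝ) (h : IsProblem c E) (i : Fin n) :
    φ n c E i = φ n c (∑ j, c j) i * (E / ∑ j, c j) := by
  set C := ∑ j, c j with hCdef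
  have hC : 0 < C := h.2.1
  set f : ℝ → ℝ := fun t => φ n c t i with hfdef
  have hprob : ∀ t : ℝ, 0 ≤ t → t ≤ C → IsProblem c t := fun t ht htC => ⟨h.1, h.2.1, ht, htC⟩
  have hadd : ∀ a b : ℝ, 0 ≤ a → 0 ≤ b → a + b ≤ C → f (a + b) = f a + f b := by
    intro a b ha hb hab
    have := hBA n c (a + b) a b (hprob _ (by linarith) hab) ha hb rfl
    exact congrFun this i
  have hnn : ∀ t : ℝ, 0 ≤ t → t ≤ C → 0 ≤ f t := fun t ht htC => (hφ n c t (hprob t ht htC)).1 i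
  have hf0 : f 0 = 0 := by
    have := hadd 0 0 le_rfl le_rfl (by linarith)
    simp only [add_zero] at this
    linarith
  have hmono : ∀ a b : ℝ, 0 ≤ a → a ≤ b → b ≤ C → f a ≤ f b := by
    intro a b ha hab hbC
    have h1 := hadd a (b - a) ha (by linarith) (by linarith)
    have h2 := hnn (b - a) (by linarith) (by linarith)
    have h3 : a + (b - a) = b := by ring
    rw [h3] at h1
    linarith
  have hsmul : ∀ (k : ℕ) (t : ℝ), 0 ≤ t → (k : ℝ) * t ≤ C → f ((k : ℝ) * t) = (k : ℝ) * f t := by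
    intro k
    induction k with
    | zero => intro t ht h'; simp [hf0]
    | succ k ih =>
      intro t ht h'
      push_cast at h' ⊢
      have hk : (k : ℝ) * t ≤ C := by nlinarith
      have he : ((k : ℝ) + 1) * t = (k : ℝ) * t + t := by ring
      rw [he, hadd _ t (by positivity) ht (by linarith), ih t ht hk]
      ring
  have hfrac : ∀ p q : ℕ, 0 < q → p ≤ q → f ((p : ℝ) / q * C) = (p : ℝ) / q * f C := by
    intro p q hq hpq
    have hq' : (0:ℝ) < q := by positivity
    have hqC : (q : ℝ) * (C / q) = C := by field_simp
    have hCq : f C = (q : ℝ) * f (C / q) := by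
      have := hsmul q (C / q) (by positivity) (by rw [hqC])
      rw [hqC] at this
      exact this
    have h1 : f ((p:ℝ) * (C / q)) = (p : ℝ) * f (C / q) := by
      apply hsmul p (C / q) (by positivity)
      have hle : (p:ℝ) * (C / q) ≤ (q:ℝ) * (C / q) := by
        apply mul_le_mul_of_nonneg_right _ (by positivity)
        exact_mod_cast hpq
      rw [hqC] at hle
      exact hle
    have h2 : (p:ℝ) / q * C = (p:ℝ) * (C / q) := by ring
    have h3 : f (C / q) = f C / q := by rw [hCq]; field_simp
    rw [h2, h1, h3]
    ring
  set t := E / C with htdef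
  have ht0 : 0 ≤ t := div_nonneg h.2.2.1 hC.le
  have ht1 : t ≤ 1 := (div_le_one hC).2 h.2.2.2
  have htC : t * C = E := div_mul_cancel₀ E (ne_of_gt hC)
  have hfC : 0 ≤ f C := hnn C hC.le le_rfl
  have hub : ∀ q : ℕ, 0 < q → f E ≤ t * f C + f C / q := by
    intro q hq
    have hq' : (0:ℝ) < q := by positivity
    set p : ℕ := min (⌊t * q⌋₊ + 1) q with hpdef
    have hple : p ≤ q := min_le_right _ _
    have htp : t ≤ (p:ℝ) / q := by
      rcases le_or_gt (⌊t * q⌋₊ + 1) q with hcase | hcase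
      · have hp : p = ⌊t * q⌋₊ + 1 := min_eq_left hcase
        have hfl := Nat.lt_floor_add_one (t * q)
        rw [hp, le_div_iff₀ hq']
        push_cast
        linarith
      · have hp : p = q := min_eq_right (le_of_lt hcase)
        rw [hp, div_self (ne_of_gt hq')]
        exact ht1
    have hplow : (p:ℝ) / q ≤ t + 1 / q := by
      have h4 : (p : ℝ) ≤ (⌊t * q⌋₊ : ℝ) + 1 := by exact_mod_cast min_le_left _ _
      have h5 : (⌊t * q⌋₊ : ℝ) ≤ t * q := Nat.floor_le (by positivity)
      rw [div_le_iff₀ hq']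
      have he : (t + 1 / q) * q = t * q + 1 := by field_simp
      rw [he]
      linarith
    have hmain : f E ≤ (p:ℝ) / q * f C := by
      have hm := hmono E ((p:ℝ) / q * C) h.2.2.1
        (by rw [← htC]; exact mul_le_mul_of_nonneg_right htp hC.le)
        (by
          have hle1 : (p:ℝ) / q ≤ 1 := by
            rw [div_le_one hq']; exact_mod_cast hple
          nlinarith)
      rwa [hfrac p q hq hple] at hm
    calc f E ≤ (p:ℝ) / q * f C := hmain
      _ ≤ (t + 1 / q) * f C := mul_le_mul_of_nonneg_right hplow hfC
      _ = t * f C + f C / q := by ring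
  have hlb : ∀ q : ℕ, 0 < q → t * f C - f C / q ≤ f E := by
    intro q hq
    have hq' : (0:ℝ) < q := by positivity
    set p : ℕ := ⌊t * q⌋₊ with hpdef
    have hp_le : (p:ℝ) ≤ t * q := Nat.floor_le (by positivity)
    have hple : p ≤ q := by
      have hle : t * q ≤ (q:ℝ) := by nlinarith
      calc p = ⌊t * q⌋₊ := rfl
        _ ≤ ⌊(q:ℝ)⌋₊ := Nat.floor_mono hle
        _ = q := Nat.floor_natCast q
    have htp : (p:ℝ) / q ≤ t := by rw [div_le_iff₀ hq']; linarith
    have hgt : t - 1 / q ≤ (p:ℝ) / q := by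
      have hfl := Nat.lt_floor_add_one (t * q)
      rw [le_div_iff₀ hq']
      have he : (t - 1 / q) * q = t * q - 1 := by field_simp
      rw [he]
      push_cast at hfl ⊢
      linarith
    have hmain : (p:ℝ) / q * f C ≤ f E := by
      have hm := hmono ((p:ℝ) / q * C) E (by positivity)
        (by rw [← htC]; exact mul_le_mul_of_nonneg_right htp hC.le) h.2.2.2
      rwa [hfrac p q hq hple] at hm
    calc t * f C - f C / q = (t - 1 / q) * f C := by ring
      _ ≤ (p:ℝ) / q * f C := mul_le_mul_of_nonneg_right hgt hfC
      _ ≤ f E := hmain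
  have key : f E = t * f C := by
    have h1 : f E ≤ t * f C := by
      apply le_of_forall_pos_le_add
      intro ε hε
      obtain ⟨q, hq⟩ := exists_nat_gt (f C / ε)
      have hq0 : 0 < q := by
        have : (0:ℝ) < q := lt_of_le_of_lt (by positivity) hq
        exact_mod_cast this
      have hq' : (0:ℝ) < q := by positivity
      have hεq : f C / q ≤ ε := by
        rw [div_le_iff₀ hq']
        rw [div_lt_iff₀ hε] at hq
        nlinarith
      linarith [hub q hq0]
    have h2 : t * f C ≤ f E := by
      apply le_of_forall_pos_le_add
      intro ε hε
      obtain ⟨q, hq⟩ := exists_nat_gt (f C / ε)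
      have hq0 : 0 < q := by
        have : (0:ℝ) < q := lt_of_le_of_lt (by positivity) hq
        exact_mod_cast this
      have hq' : (0:ℝ) < q := by positivity
      have hεq : f C / q ≤ ε := by
        rw [div_le_iff₀ hq']
        rw [div_lt_iff₀ hε] at hq
        nlinarith
      linarith [hlb q hq0]
    linarith
  show f E = f C * (E / C)
  rw [key, ← htdef]
  ring

end BudgetLinear
section Chain

lemma one_change (φ : RuleFun) (hUI : UpstreamInvariant φ) {n : ℕ} (c d : Fin n → ℝ)
    (hc : ∀ j, 0 ≤ c j) (hd : ∀ j, 0 ≤ d j) (hsc : 0 < ∑ j, c j) (hsd : 0 < ∑ j, d j)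
    (i : Fin n) (hagree : ∀ j, j ≠ i → c j = d j) (k : Fin n) (hk : k < i) :
    φ n c (∑ j, c j) k = φ n d (∑ j, d j) k := by
  have hrc : IsRedistribution c (∑ j, c j) := ⟨⟨hc, hsc, hsc.le, le_rfl⟩, rfl⟩
  have hrd : IsRedistribution d (∑ j, d j) := ⟨⟨hd, hsd, hsd.le, le_rfl⟩, rfl⟩
  rcases lt_trichotomy (c i) (d i) with h | h | h
  · exact hUI n c d hrc hrd i h hagree k hk
  · have hcd : c = d := funext fun j => by
      by_cases hj : j = i
      · rwa [hj]
      · exact hagree j hj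
    rw [hcd]
  · exact (hUI n d c hrd hrc i h (fun j hj => (hagree j hj).symm) k hk).symm

lemma phi0_chain (φ : RuleFun) (hφ : IsRule φ) (hUI : UpstreamInvariant φ) (m : ℕ) :
    ∀ (N : ℕ) (c d : Fin (m + 2) → ℝ),
    (Finset.univ.filter (fun j => c j ≠ d j)).card ≤ N →
    (∀ j, 0 ≤ c j) → (∀ j, 0 ≤ d j) → c 0 = d 0 →
    c (Fin.last (m + 1)) = d (Fin.last (m + 1)) → 0 < d (Fin.last (m + 1)) →
    φ (m + 2) c (∑ j, c j) 0 = φ (m + 2) d (∑ j, d j) 0 := by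
  classical
  intro N
  induction N with
  | zero =>
    intro c d hcard hc hd h0 hl hpos
    have hfe : (Finset.univ.filter (fun j => c j ≠ d j)) = ∅ :=
      Finset.card_eq_zero.1 (Nat.le_zero.1 hcard)
    have hcd : c = d := funext fun j => by
      by_contra hj
      have : j ∈ Finset.univ.filter (fun j => c j ≠ d j) := by
        simp [hj]
      rw [hfe] at this
      exact absurd this (Finset.notMem_empty j)
    rw [hcd]
  | succ N ih =>
    intro c d hcard hc hd h0 hl hpos
    by_cases hcd : c = d
    · rw [hcd]
    · have hne : ∃ j, c j ≠ d j := by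
        by_contra h
        push_neg at h
        exact hcd (funext h)
      obtain ⟨j, hj⟩ := hne
      have hj0 : j ≠ 0 := fun h => hj (by rw [h]; exact h0)
      have hjl : j ≠ Fin.last (m + 1) := fun h => hj (by rw [h]; exact hl)
      set c' := Function.update c j (d j) with hc'def
      have hc' : ∀ l, 0 ≤ c' l := fun l => by
        rcases eq_or_ne l j with h | h
        · rw [hc'def, h, Function.update_self]; exact hd j
        · rw [hc'def, Function.update_of_ne h]; exact hc l
      have hc'last : c' (Fin.last (m + 1)) = c (Fin.last (m + 1)) := by
        rw [hc'def, Function.update_of_ne (Ne.symm hjl)]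
      have hc'0 : c' 0 = c 0 := by
        rw [hc'def, Function.update_of_ne (Ne.symm hj0)]
      have hsc : 0 < ∑ l, c l := by
        have h1 : c (Fin.last (m + 1)) ≤ ∑ l, c l :=
          Finset.single_le_sum (fun l _ => hc l) (Finset.mem_univ _)
        rw [hl] at h1
        linarith
      have hsc' : 0 < ∑ l, c' l := by
        have h1 : c' (Fin.last (m + 1)) ≤ ∑ l, c' l :=
          Finset.single_le_sum (fun l _ => hc' l) (Finset.mem_univ _)
        rw [hc'last, hl] at h1
        linarith
      have step1 : φ (m + 2) c (∑ l, c l) 0 = φ (m + 2) c' (∑ l, c' l) 0 := by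
        apply one_change φ hUI c c' hc hc' hsc hsc' j
        · intro l hlj
          rw [hc'def, Function.update_of_ne hlj]
        · exact Fin.pos_iff_ne_zero.2 hj0
      have hcard' : (Finset.univ.filter (fun l => c' l ≠ d l)).card ≤ N := by
        have hsub : (Finset.univ.filter (fun l => c' l ≠ d l))
            ⊆ (Finset.univ.filter (fun l => c l ≠ d l)).erase j := by
          intro l hlmem
          rw [Finset.mem_filter] at hlmem
          have hlj : l ≠ j := by
            intro h
            apply hlmem.2
            rw [h, hc'def, Function.update_self]
          rw [Finset.mem_erase, Finset.mem_filter]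
          refine ⟨hlj, Finset.mem_univ _, ?_⟩
          have h2 := hlmem.2
          rw [hc'def, Function.update_of_ne hlj] at h2
          exact h2
        have hjmem : j ∈ Finset.univ.filter (fun l => c l ≠ d l) := by simp [hj]
        have hle := Finset.card_le_card hsub
        rw [Finset.card_erase_of_mem hjmem] at hle
        omega
      exact step1.trans (ih c' d hcard' hc' hd (hc'0.trans h0) (hc'last.trans hl) hpos)

end Chain
section Head

/-- Auxiliary claims vector with head `t`, tail `s`, zeros in between. -/
noncomputable def eVec (m : ℕ) (t s : ℝ) : Fin (m + 2) → ℝ :=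
  fun j => singleClaim (0 : Fin (m + 2)) t j + singleClaim (Fin.last (m + 1)) s j

lemma last_ne_zero (m : ℕ) : Fin.last (m + 1) ≠ (0 : Fin (m + 2)) := by
  simp [Fin.ext_iff]

lemma sum_eVec (m : ℕ) (t s : ℝ) : ∑ j, eVec m t s j = t + s := by
  unfold eVec
  rw [Finset.sum_add_distrib, sum_singleClaim, sum_singleClaim]

lemma eVec_zero (m : ℕ) (t s : ℝ) : eVec m t s 0 = t := by
  simp [eVec, singleClaim, Ne.symm (last_ne_zero m)]

lemma eVec_last (m : ℕ) (t s : ℝ) : eVec m t s (Fin.last (m + 1)) = s := by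
  simp [eVec, singleClaim, last_ne_zero m]

lemma eVec_nonneg (m : ℕ) (t s : ℝ) (ht : 0 ≤ t) (hs : 0 ≤ s) : ∀ j, 0 ≤ eVec m t s j := by
  intro j
  unfold eVec singleClaim
  split_ifs <;> (try simp) <;> linarith

lemma eVec_agree_off_last (m : ℕ) (t s s' : ℝ) :
    ∀ j, j ≠ Fin.last (m + 1) → eVec m t s j = eVec m t s' j := by
  intro j hj
  simp [eVec, singleClaim, hj]

lemma phi0_to_eVec (φ : RuleFun) (hφ : IsRule φ) (hUI : UpstreamInvariant φ) (m : ℕ)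
    (c : Fin (m + 2) → ℝ) (hc : ∀ j, 0 ≤ c j) (hs : 0 < ∑ j, c j) :
    φ (m + 2) c (∑ j, c j) 0 = φ (m + 2) (eVec m (c 0) 1) (∑ j, eVec m (c 0) 1 j) 0 := by
  classical
  set c1 := Function.update c (Fin.last (m + 1)) (c (Fin.last (m + 1)) + 1) with hc1def
  have hc1 : ∀ j, 0 ≤ c1 j := by
    intro j
    rcases eq_or_ne j (Fin.last (m + 1)) with h | h
    · rw [hc1def, h, Function.update_self]; linarith [hc (Fin.last (m + 1))]
    · rw [hc1def, Function.update_of_ne h]; exact hc j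
  have hc1last : c1 (Fin.last (m + 1)) = c (Fin.last (m + 1)) + 1 := Function.update_self _ _ _
  have hc10 : c1 0 = c 0 := Function.update_of_ne (Ne.symm (last_ne_zero m)) _ _
  have hsc1 : 0 < ∑ j, c1 j := by
    have h1 : c1 (Fin.last (m + 1)) ≤ ∑ j, c1 j :=
      Finset.single_le_sum (fun l _ => hc1 l) (Finset.mem_univ _)
    rw [hc1last] at h1
    linarith [hc (Fin.last (m + 1))]
  have step1 : φ (m + 2) c (∑ j, c j) 0 = φ (m + 2) c1 (∑ j, c1 j) 0 := by
    apply one_change φ hUI c c1 hc hc1 hs hsc1 (Fin.last (m + 1))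
    · intro j hj
      rw [hc1def, Function.update_of_ne hj]
    · rw [Fin.lt_iff_val_lt_val]
      simp
  have hmidnn : ∀ j, 0 ≤ eVec m (c 0) (c (Fin.last (m + 1)) + 1) j :=
    eVec_nonneg m _ _ (hc 0) (by linarith [hc (Fin.last (m + 1))])
  have step2 : φ (m + 2) c1 (∑ j, c1 j) 0
      = φ (m + 2) (eVec m (c 0) (c (Fin.last (m + 1)) + 1))
          (∑ j, eVec m (c 0) (c (Fin.last (m + 1)) + 1) j) 0 := by
    apply phi0_chain φ hφ hUI m _ c1 _ le_rfl hc1 hmidnn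
    · rw [hc10, eVec_zero]
    · rw [hc1last, eVec_last]
    · rw [eVec_last]; linarith [hc (Fin.last (m + 1))]
  have step3 : φ (m + 2) (eVec m (c 0) (c (Fin.last (m + 1)) + 1))
        (∑ j, eVec m (c 0) (c (Fin.last (m + 1)) + 1) j) 0
      = φ (m + 2) (eVec m (c 0) 1) (∑ j, eVec m (c 0) 1 j) 0 := by
    apply one_change φ hUI _ _ hmidnn (eVec_nonneg m _ _ (hc 0) zero_le_one)
      (by rw [sum_eVec]; linarith [hc 0, hc (Fin.last (m + 1))])
      (by rw [sum_eVec]; linarith [hc 0]) (Fin.last (m + 1))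
      (eVec_agree_off_last m (c 0) _ _)
    rw [Fin.lt_iff_val_lt_val]
    simp
  rw [step1, step2, step3]

lemma phi0_of_head_zero (φ : RuleFun) (hφ : IsRule φ) (hUI : UpstreamInvariant φ) (m : ℕ)
    (c : Fin (m + 2) → ℝ) (hc : ∀ j, 0 ≤ c j) (hs : 0 < ∑ j, c j) (h0 : c 0 = 0) :
    φ (m + 2) c (∑ j, c j) 0 = 0 := by
  have h1 := phi0_to_eVec φ hφ hUI m c hc hs
  rw [h0] at h1
  have hconst : ∀ s : ℝ, 0 < s →
      φ (m + 2) (eVec m 0 s) (∑ j, eVec m 0 s j) 0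
        = φ (m + 2) (eVec m 0 1) (∑ j, eVec m 0 1 j) 0 := by
    intro s hspos
    apply one_change φ hUI _ _ (eVec_nonneg m 0 s le_rfl hspos.le)
      (eVec_nonneg m 0 1 le_rfl zero_le_one)
      (by rw [sum_eVec]; linarith) (by rw [sum_eVec]; linarith) (Fin.last (m + 1))
      (eVec_agree_off_last m 0 s 1)
    rw [Fin.lt_iff_val_lt_val]
    simp
  have hbound : ∀ s : ℝ, 0 < s → φ (m + 2) (eVec m 0 1) (∑ j, eVec m 0 1 j) 0 ≤ s := by
    intro s hspos
    rw [← hconst s hspos]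
    have hprob : IsProblem (eVec m 0 s) (∑ j, eVec m 0 s j) :=
      ⟨eVec_nonneg m 0 s le_rfl hspos.le, by rw [sum_eVec]; linarith, by
        rw [sum_eVec]; linarith, le_rfl⟩
    obtain ⟨hnn, hsum⟩ := hφ (m + 2) (eVec m 0 s) _ hprob
    have h2 : φ (m + 2) (eVec m 0 s) (∑ j, eVec m 0 s j) 0
        ≤ ∑ i, φ (m + 2) (eVec m 0 s) (∑ j, eVec m 0 s j) i :=
      Finset.single_le_sum (fun l _ => hnn l) (Finset.mem_univ _)
    rw [hsum] at h2
    have h3 : ∑ j, eVec m 0 s j = s := by rw [sum_eVec, zero_add]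
    linarith
  have hge : 0 ≤ φ (m + 2) (eVec m 0 1) (∑ j, eVec m 0 1 j) 0 := by
    have hprob : IsProblem (eVec m 0 1) (∑ j, eVec m 0 1 j) :=
      ⟨eVec_nonneg m 0 1 le_rfl zero_le_one, by rw [sum_eVec]; linarith, by
        rw [sum_eVec]; linarith, le_rfl⟩
    exact (hφ _ _ _ hprob).1 0
  have hle : φ (m + 2) (eVec m 0 1) (∑ j, eVec m 0 1 j) 0 ≤ 0 := by
    apply le_of_forall_pos_le_add
    intro ε hε
    rw [zero_add]
    exact hbound ε hε
  rw [h1]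
  linarith

lemma phi0_of_head_pos (φ : RuleFun) (hφ : IsRule φ) (hUI : UpstreamInvariant φ) (m : ℕ)
    (c : Fin (m + 2) → ℝ) (hc : ∀ j, 0 ≤ c j) (hs : 0 < ∑ j, c j) (h0 : 0 < c 0) :
    φ (m + 2) c (∑ j, c j) 0 = φ (m + 2) (singleClaim 0 (c 0)) (c 0) 0 := by
  have h1 := phi0_to_eVec φ hφ hUI m c hc hs
  have step : φ (m + 2) (eVec m (c 0) 1) (∑ j, eVec m (c 0) 1 j) 0
      = φ (m + 2) (eVec m (c 0) 0) (∑ j, eVec m (c 0) 0 j) 0 := by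
    apply one_change φ hUI _ _ (eVec_nonneg m _ 1 h0.le zero_le_one)
      (eVec_nonneg m _ 0 h0.le le_rfl)
      (by rw [sum_eVec]; linarith) (by rw [sum_eVec]; linarith) (Fin.last (m + 1))
      (eVec_agree_off_last m (c 0) 1 0)
    rw [Fin.lt_iff_val_lt_val]
    simp
  have heq : eVec m (c 0) 0 = singleClaim (0 : Fin (m + 2)) (c 0) := by
    funext j
    simp [eVec, singleClaim]
  rw [h1, step, heq, sum_singleClaim]

end Head
section GamSec

/-- The transfer function extracted from the rule `φ`. -/
noncomputable def Gam (φ : RuleFun) : ℝ → ℝ :=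
  fun t => if 0 < t then φ 2 (singleClaim (0 : Fin 2) t) t 0 else 0

lemma Gam_transfer (φ : RuleFun) (hφ : IsRule φ) : IsTransferFunction (Gam φ) := by
  intro t ht
  rcases eq_or_lt_of_le ht with h | h
  · simp [Gam, ← h]
  · have hprob : IsProblem (singleClaim (0 : Fin 2) t) t := isProblem_singleClaim _ t h
    obtain ⟨hnn, hsum⟩ := hφ 2 _ t hprob
    rw [Fin.sum_univ_two] at hsum
    constructor
    · rw [Gam, if_pos h]; exact hnn 0
    · rw [Gam, if_pos h]
      have := hnn 1
      linarith

lemma single_descend (φ : RuleFun) (hφ : IsRule φ) (hUI : UpstreamInvariant φ)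
    (hET : EqualTreatmentOfEqualSinglePolluters φ) (hTC : TopConsistent φ)
    (m : ℕ) (t : ℝ) (ht : 0 < t) :
    φ (m + 3) (singleClaim (0 : Fin (m + 3)) t) t 0
      = φ (m + 2) (singleClaim (0 : Fin (m + 2)) t) t 0 := by
  set u := singleClaim (1 : Fin (m + 3)) t with hudef
  have h01 : (0 : Fin (m + 3)) ≠ 1 := by simp [Fin.ext_iff]
  have hu0 : u 0 = 0 := by rw [hudef]; simp [singleClaim, h01]
  have hsum_u : ∑ j, u j = t := sum_singleClaim _ t
  have hunn : ∀ j, 0 ≤ u j := (isProblem_singleClaim _ t ht).1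
  have hA0 : φ (m + 3) u (∑ j, u j) 0 = 0 :=
    phi0_of_head_zero φ hφ hUI (m + 1) u hunn (by rw [hsum_u]; exact ht) hu0
  rw [hsum_u] at hA0
  have hred : IsRedistribution u t := by
    refine ⟨?_, hsum_u.symm⟩
    rw [hudef]
    exact isProblem_singleClaim _ t ht
  have hle : φ (m + 3) u t 0 ≤ u 0 := by rw [hA0, hu0]
  have hreduced_eq : reducedClaims u (0 : ℝ) = singleClaim (0 : Fin (m + 2)) t := by
    funext k
    unfold reducedClaims singleClaim
    rw [hu0]
    have hsv : ((k.succ : Fin (m + 3)) : ℕ) = (k : ℕ) + 1 := rfl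
    by_cases hk : k = (0 : Fin (m + 2))
    · subst hk
      have : (0 : Fin (m + 2)).succ = (1 : Fin (m + 3)) := by simp [Fin.ext_iff]
      rw [this, hudef]
      simp [singleClaim]
    · have hkv : (k : ℕ) ≠ 0 := by
        intro h
        exact hk (by simp [Fin.ext_iff, h])
      have : k.succ ≠ (1 : Fin (m + 3)) := by
        exact fun h => hkv (by have := congrArg Fin.val h; rw [Fin.val_succ, Fin.val_one] at this; omega)
        try omega
      rw [if_neg hkv, if_neg hk, hudef]
      simp [singleClaim, this]
  have hprob_red : IsProblem (reducedClaims u (φ (m + 3) u t 0)) (t - φ (m + 3) u t 0) := by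
    rw [hA0, hreduced_eq, sub_zero]
    exact isProblem_singleClaim _ t ht
  have hTCk := hTC (m + 1) u t hred hle hprob_red (0 : Fin (m + 2))
  rw [hA0, hreduced_eq, sub_zero] at hTCk
  have hsucc0 : ((0 : Fin (m + 2)).succ) = (1 : Fin (m + 3)) := by simp [Fin.ext_iff]
  rw [hsucc0] at hTCk
  have hETapp := hET (m + 3) (by omega) t ht 0 1 (by simp) (by simp [Fin.val_one])
  rw [← hudef] at hETapp
  rw [hETapp, hTCk]

lemma single_eq_Gam (φ : RuleFun) (hφ : IsRule φ) (hUI : UpstreamInvariant φ)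
    (hET : EqualTreatmentOfEqualSinglePolluters φ) (hTC : TopConsistent φ) :
    ∀ (m : ℕ) (t : ℝ), 0 < t →
      φ (m + 2) (singleClaim (0 : Fin (m + 2)) t) t 0 = Gam φ t := by
  intro m
  induction m with
  | zero => intro t ht; rw [Gam, if_pos ht]
  | succ m ih =>
    intro t ht
    rw [single_descend φ hφ hUI hET hTC m t ht, ih t ht]

end GamSec
section Main

lemma mainred (φ : RuleFun) (hφ : IsRule φ) (hUI : UpstreamInvariant φ)
    (hET : EqualTreatmentOfEqualSinglePolluters φ) (hTC : TopConsistent φ) :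
    ∀ (n : ℕ) (c : Fin n → ℝ), (∀ j, 0 ≤ c j) → 0 < ∑ j, c j →
      ∀ i, φ n c (∑ j, c j) i = genGeomShare (Gam φ) c i := by
  intro n
  induction n using Nat.strong_induction_on with
  | _ n ih =>
    match n with
    | 0 => intro c _ _ i; exact i.elim0
    | 1 =>
      intro c hc hs i
      have hprob : IsProblem c (∑ j, c j) := ⟨hc, hs, hs.le, le_rfl⟩
      have hsum := (hφ 1 c _ hprob).2
      rw [Fin.sum_univ_one] at hsum
      have hi : i = 0 := Subsingleton.elim i 0
      subst hi
      rw [hsum, genGeomShare_eq, if_pos (by simp)]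
      have h00 : ((0 : Fin 1) : ℕ) = 0 := rfl
      rw [h00, Ssum_zero]
      rw [Fin.sum_univ_one]
      simp [extendClaims, Fin.mk_zero]
    | (m + 2) =>
      intro c hc hs i
      have hΓ := Gam_transfer φ hφ
      have hA : φ (m + 2) c (∑ j, c j) 0 = Gam φ (c 0) := by
        rcases eq_or_lt_of_le (hc 0) with h0 | h0
        · rw [phi0_of_head_zero φ hφ hUI m c hc hs h0.symm, Gam,
            if_neg (by rw [← h0]; exact lt_irrefl 0)]
        · rw [phi0_of_head_pos φ hφ hUI m c hc hs h0,
            single_eq_Gam φ hφ hUI hET hTC m (c 0) h0]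
      have hx0 : 0 ≤ Gam φ (c 0) := (hΓ (c 0) (hc 0)).1
      have hxc : Gam φ (c 0) ≤ c 0 := (hΓ (c 0) (hc 0)).2
      have hc0sum : c 0 ≤ ∑ j, c j :=
        Finset.single_le_sum (fun l _ => hc l) (Finset.mem_univ _)
      rcases eq_or_lt_of_le (le_trans hxc hc0sum) with heq | hlt
      · -- degenerate case: the whole budget goes to agent 0
        have hc0 : c 0 = ∑ j, c j := le_antisymm hc0sum (by rw [← heq]; exact hxc)
        have hxc0 : Gam φ (c 0) = c 0 := by linarith
        have htail : ∀ j : Fin (m + 2), j ≠ 0 → c j = 0 := by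
          intro j hj
          by_contra hne
          have hpos : 0 < c j := lt_of_le_of_ne (hc j) (Ne.symm hne)
          have hpair : c 0 + c j ≤ ∑ l, c l := by
            have hsub : ({0, j} : Finset (Fin (m + 2))) ⊆ Finset.univ :=
              Finset.subset_univ _
            have := Finset.sum_le_sum_of_subset_of_nonneg hsub
              (fun l _ _ => hc l)
            rwa [Finset.sum_pair (Ne.symm hj)] at this
          rw [← hc0] at hpair
          linarith
        have hprob : IsProblem c (∑ j, c j) := ⟨hc, hs, hs.le, le_rfl⟩
        obtain ⟨hnn, hsumφ⟩ := hφ (m + 2) c _ hprob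
        have hothers : ∀ l : Fin (m + 2), l ≠ 0 → φ (m + 2) c (∑ j, c j) l = 0 := by
          intro l hl
          have h1 : φ (m + 2) c (∑ j, c j) 0
              + ∑ p ∈ Finset.univ.erase 0, φ (m + 2) c (∑ j, c j) p
              = ∑ p, φ (m + 2) c (∑ j, c j) p :=
            Finset.add_sum_erase Finset.univ _ (Finset.mem_univ 0)
          rw [hsumφ, hA, hxc0, hc0] at h1
          have h2 : ∑ p ∈ Finset.univ.erase 0, φ (m + 2) c (∑ j, c j) p = 0 := by
            linarith
          have := (Finset.sum_eq_zero_iff_of_nonneg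
            (fun p _ => hnn p)).1 h2 l (Finset.mem_erase.2 ⟨hl, Finset.mem_univ _⟩)
          exact this
        have hSzero : ∀ k : ℕ, 1 ≤ k → k ≤ m + 1 →
            Ssum (Gam φ) (extendClaims c) k = 0 := by
          intro k
          induction k with
          | zero => omega
          | succ k ihk =>
            intro _ hk2
            rcases Nat.eq_zero_or_pos k with hk0 | hkpos
            · subst hk0
              rw [Ssum_succ, rGammaNat_eq, Ssum_zero]
              have he0 : extendClaims c 0 = c 0 := by simp [extendClaims, Fin.mk_zero]
              have he1 : extendClaims c 1 = c 1 := by simp [extendClaims, Fin.mk_one]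
              have h1 : c 1 = 0 := htail 1 (by simp [Fin.ext_iff])
              rw [he0, he1, h1, hxc0]
              ring
            · have hSk := ihk (by omega) (by omega)
              rw [Ssum_succ, rGammaNat_eq, hSk, Gamma_zero hΓ]
              have hek : extendClaims c (k + 1) = 0 := by
                by_cases h : k + 1 < m + 2
                · have : c ⟨k + 1, h⟩ = 0 := htail ⟨k + 1, h⟩ (by simp [Fin.ext_iff])
                  simp [extendClaims, h, this]
                · simp [extendClaims, h]
              rw [hek]
              ring
        refine Fin.cases ?_ ?_ i
        · rw [hA, genGeomShare_zero]
        · intro k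
          rw [hothers k.succ (Fin.succ_ne_zero k), genGeomShare_eq]
          have hk1 : 1 ≤ ((k.succ : Fin (m + 2)) : ℕ) := by simp
          have hk2 : ((k.succ : Fin (m + 2)) : ℕ) ≤ m + 1 :=
            Nat.lt_succ_iff.1 k.succ.isLt
          split_ifs with hterm
          · exact (hSzero _ hk1 hk2).symm
          · rw [rGammaNat_eq, hSzero _ hk1 hk2, Gamma_zero hΓ]
      · -- main case : positive residual budget
        have hrednn : ∀ k, 0 ≤ reducedClaims c (Gam φ (c 0)) k := by
          intro k
          unfold reducedClaims
          split_ifs with h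
          · have := hc k.succ
            linarith
          · simpa using hc k.succ
        have hsumred : ∑ k, reducedClaims c (Gam φ (c 0)) k = (∑ j, c j) - Gam φ (c 0) :=
          sum_reducedClaims c _
        have hprobred : IsProblem (reducedClaims c (Gam φ (c 0)))
            ((∑ j, c j) - Gam φ (c 0)) :=
          ⟨hrednn, by rw [hsumred]; linarith, by linarith, le_of_eq hsumred.symm⟩
        have hredis : IsRedistribution c (∑ j, c j) := ⟨⟨hc, hs, hs.le, le_rfl⟩, rfl⟩
        have hle0 : φ (m + 2) c (∑ j, c j) 0 ≤ c 0 := by rw [hA]; exact hxc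
        have hprob' : IsProblem (reducedClaims c (φ (m + 2) c (∑ j, c j) 0))
            ((∑ j, c j) - φ (m + 2) c (∑ j, c j) 0) := by
          rw [hA]; exact hprobred
        have hTCk := hTC m c (∑ j, c j) hredis hle0 hprob'
        have hIH := ih (m + 1) (by omega) (reducedClaims c (Gam φ (c 0))) hrednn
          (by rw [hsumred]; linarith)
        refine Fin.cases ?_ ?_ i
        · rw [hA, genGeomShare_zero]
        · intro k
          have h1 := hTCk k
          rw [hA] at h1
          have h2 := hIH k
          rw [hsumred] at h2
          rw [h1, h2, genGeomShare_shift c (Gam φ (c 0)) rfl k]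

end Main
/-- Theorem 2: a rule satisfies upstream invariance, equal treatment of
equal single polluters, top consistency and budget additivity iff it is a generalized
geometric rule `φ^Γ` for some `Γ : ℝ₊ → ℝ₊` with `0 ≤ Γ(t) ≤ t`. -/
theorem generalized_geometric_characterization (φ : RuleFun) (hφ : IsRule φ) :
    (UpstreamInvariant φ ∧ EqualTreatmentOfEqualSinglePolluters φ ∧
        TopConsistent φ ∧ BudgetAdditive φ) ↔
      ∃ Γ : ℝ → ℝ, IsTransferFunction Γ ∧
        ∀ (n : ℕ) (c : Fin n → ℝ) (E : ℝ), IsProblem c E →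
          φ n c E = genGeomAlloc Γ n c E := by
  constructor
  · rintro ⟨hUI, hET, hTC, hBA⟩
    refine ⟨Gam φ, Gam_transfer φ hφ, ?_⟩
    intro n c E hprob
    funext i
    have hlin := budget_linear φ hφ hBA c E hprob i
    have hred := mainred φ hφ hUI hET hTC n c hprob.1 hprob.2.1 i
    rw [hlin, hred]
    rfl
  · rintro ⟨Γ, hΓ, heq⟩
    exact backward_dir φ hφ Γ hΓ heq
end

section
/- For every function Γ: ℝ_+ → ℝ_+ with 0 ≤ Γ(t) ≤ t for all t, the generalized geometric rule φ^Γ satisfies upstream invariance, equal treatment of equal single polluters, top consistency and budget additivity. -/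
open Finset

lemma rGammaNat_eq_s5 (Γ : ℝ → ℝ) (c : ℕ → ℝ) (i : ℕ) :
    rGammaNat Γ c i = Γ (c i + ∑ k : Fin i, (c k - rGammaNat Γ c k)) := by
  rw [rGammaNat]

lemma rGammaNat_prefix (Γ : ℝ → ℝ) {a b : ℕ → ℝ} :
    ∀ k, (∀ j, j ≤ k → a j = b j) → rGammaNat Γ a k = rGammaNat Γ b k := by
  intro k
  induction k using Nat.strong_induction_on with
  | _ k ih =>
    intro h
    rw [rGammaNat_eq_s5, rGammaNat_eq_s5]
    congr 1
    rw [h k le_rfl]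
    congr 1
    refine Finset.sum_congr rfl fun j _ => ?_
    rw [h j j.isLt.le, ih j j.isLt fun m hm => h m (hm.trans j.isLt.le)]

lemma rGammaNat_zero_prefix (Γ : ℝ → ℝ) (hΓ0 : Γ 0 = 0) {a : ℕ → ℝ} :
    ∀ k, (∀ j, j ≤ k → a j = 0) → rGammaNat Γ a k = 0 := by
  intro k
  induction k using Nat.strong_induction_on with
  | _ k ih =>
    intro h
    rw [rGammaNat_eq_s5, h k le_rfl]
    have : ∀ j : Fin k, a j - rGammaNat Γ a j = 0 := fun j => by
      rw [h j j.isLt.le, ih j j.isLt fun m hm => h m (hm.trans j.isLt.le), sub_zero]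
    rw [Finset.sum_congr rfl fun j _ => this j]
    simpa using hΓ0

lemma rGammaNat_shift_arg (Γ : ℝ → ℝ) {a b : ℕ → ℝ}
    (hb0 : b 0 = a 1 + (a 0 - rGammaNat Γ a 0))
    (hb : ∀ k, b (k + 1) = a (k + 2)) :
    ∀ k, b k + ∑ j : Fin k, (b j - rGammaNat Γ b j)
        = a (k + 1) + ∑ j : Fin (k + 1), (a j - rGammaNat Γ a j) := by
  intro k
  induction k using Nat.strong_induction_on with
  | _ k ih =>
    have hr : ∀ m, m < k → rGammaNat Γ b m = rGammaNat Γ a (m + 1) := fun m hm => by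
      rw [rGammaNat_eq_s5, rGammaNat_eq_s5, ih m hm]
    cases k with
    | zero =>
      simp [hb0, Fin.sum_univ_one]
    | succ m =>
      rw [hb m]
      congr 1
      rw [Fin.sum_univ_succ, Fin.sum_univ_succ (f := fun j : Fin (m + 2) => a j - rGammaNat Γ a j),
        Fin.sum_univ_succ (f := fun j : Fin (m + 1) => a j.succ - rGammaNat Γ a j.succ)]
      have h0 : b 0 - rGammaNat Γ b 0 = (a 0 - rGammaNat Γ a 0) + (a 1 - rGammaNat Γ a 1) := by
        have r0 : rGammaNat Γ b 0 = rGammaNat Γ a 1 := hr 0 m.succ_pos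
        rw [r0, hb0]; ring
      have hterm : ∀ j : Fin m,
          b (j.succ : ℕ) - rGammaNat Γ b (j.succ : ℕ)
            = a ((j.succ : ℕ) + 1) - rGammaNat Γ a ((j.succ : ℕ) + 1) := fun j => by
        simp only [Fin.val_succ]
        rw [hb j, hr (j + 1) (Nat.succ_lt_succ j.isLt)]
      simp only [Fin.val_succ] at hterm ⊢
      rw [Finset.sum_congr rfl fun j _ => hterm j]
      simp only [Fin.val_zero, Nat.zero_add]
      rw [h0]
      ring

lemma rGammaNat_shift_s5 (Γ : ℝ → ℝ) {a b : ℕ → ℝ}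
    (hb0 : b 0 = a 1 + (a 0 - rGammaNat Γ a 0))
    (hb : ∀ k, b (k + 1) = a (k + 2)) (k : ℕ) :
    rGammaNat Γ b k = rGammaNat Γ a (k + 1) := by
  rw [rGammaNat_eq_s5, rGammaNat_eq_s5, rGammaNat_shift_arg Γ hb0 hb k]

/-- every generalized geometric rule `φ^Γ` satisfies upstream invariance,
equal treatment of equal single polluters, top consistency and budget additivity. -/
theorem generalized_geometric_satisfies_axioms (Γ : ℝ → ℝ) (hΓ : IsTransferFunction Γ) :
    UpstreamInvariant (genGeomAlloc Γ) ∧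
      EqualTreatmentOfEqualSinglePolluters (genGeomAlloc Γ) ∧
      TopConsistent (genGeomAlloc Γ) ∧ BudgetAdditive (genGeomAlloc Γ) := by
  have hΓ0 : Γ 0 = 0 := le_antisymm (hΓ 0 le_rfl).2 (hΓ 0 le_rfl).1
  refine ⟨?_, ?_, ?_, ?_⟩
  · -- Upstream invariance
    intro n c d hc hd i hci hcd k hk
    have hone : (∑ m, c m) / (∑ m, c m) = 1 := div_self hc.1.2.1.ne'
    have hone' : (∑ m, d m) / (∑ m, d m) = 1 := div_self hd.1.2.1.ne'
    have hkn : (k : ℕ) < n - 1 :=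
      lt_of_lt_of_le hk (Nat.le_sub_one_of_lt i.isLt)
    simp only [genGeomAlloc, hone, hone', mul_one, genGeomShare, if_neg hkn.ne]
    have hk' : (k : ℕ) < (i : ℕ) := hk
    exact rGammaNat_prefix Γ k (fun j hj => by
      unfold extendClaims
      split
      · exact hcd _ (Fin.ne_of_val_ne (by simp only [Fin.val_mk]; omega))
      · rfl)
  · -- Equal treatment of equal single polluters
    intro n hn E hE i j hi hj
    have key : ∀ i : Fin n, (i : ℕ) < n - 1 →
        genGeomAlloc Γ n (singleClaim i E) E i = Γ E := by
      intro i hi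
      have hsum : ∑ m, singleClaim i E m = E := by
        simp [singleClaim]
      have hzero : ∀ m, m < (i : ℕ) →
          rGammaNat Γ (extendClaims (singleClaim i E)) m = 0 := by
        intro m hm
        refine rGammaNat_zero_prefix Γ hΓ0 m (fun p hp => ?_)
        unfold extendClaims
        split
        · exact if_neg (Fin.ne_of_val_ne (by simp only [Fin.val_mk]; omega))
        · rfl
      have hval : extendClaims (singleClaim i E) (i : ℕ) = E := by
        unfold extendClaims
        rw [dif_pos i.isLt]
        simp [singleClaim]
      simp only [genGeomAlloc, genGeomShare, if_neg hi.ne, hsum, div_self hE.ne', mul_one]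
      rw [rGammaNat_eq_s5, hval]
      have : ∀ p : Fin (i : ℕ),
          extendClaims (singleClaim i E) p - rGammaNat Γ (extendClaims (singleClaim i E)) p
            = 0 := by
        intro p
        rw [hzero p p.isLt, sub_zero]
        unfold extendClaims
        split
        · exact if_neg (Fin.ne_of_val_ne (by simp only [Fin.val_mk]; omega))
        · rfl
      rw [Finset.sum_congr rfl fun p _ => this p]
      simp
    rw [key i hi, key j hj]
  · -- Top consistency
    intro n c E hred hx hred' k
    obtain ⟨⟨hnn, hpos, _, _⟩, hE⟩ := hred
    set x := genGeomAlloc Γ (n + 2) c E 0 with hxdef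
    have hone : E / (∑ m, c m) = 1 := by rw [hE]; exact div_self hpos.ne'
    have hx0 : x = rGammaNat Γ (extendClaims c) 0 := by
      rw [hxdef]
      simp only [genGeomAlloc, hone, mul_one, genGeomShare, Fin.val_zero]
      exact if_neg (show ¬ ((0:ℕ) = n + 2 - 1) by omega)
    set d := reducedClaims c x with hddef
    have hb0 : extendClaims d 0 = extendClaims c 1 + (extendClaims c 0 - rGammaNat Γ (extendClaims c) 0) := by
      rw [← hx0]
      show extendClaims d 0 = extendClaims c 1 + (extendClaims c 0 - x)
      unfold extendClaims
      rw [dif_pos (by omega : 0 < n + 1), dif_pos (by omega : 1 < n + 2),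
        dif_pos (by omega : 0 < n + 2)]
      show d ⟨0, _⟩ = c ⟨1, _⟩ + (c ⟨0, _⟩ - x)
      rw [hddef]
      unfold reducedClaims
      simp only [if_pos rfl]
      congr 2
    have hb : ∀ m, extendClaims d (m + 1) = extendClaims c (m + 2) := by
      intro m
      unfold extendClaims
      by_cases h : m + 1 < n + 1
      · rw [dif_pos h, dif_pos (by omega : m + 2 < n + 2)]
        show d ⟨m + 1, _⟩ = c ⟨m + 2, _⟩
        rw [hddef]
        unfold reducedClaims
        rw [if_neg (by simp), add_zero]
        congr 1
      · rw [dif_neg h, dif_neg (by omega)]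
    have hr : ∀ m, rGammaNat Γ (extendClaims d) m = rGammaNat Γ (extendClaims c) (m + 1) :=
      rGammaNat_shift_s5 Γ hb0 hb
    have hsum_if : (∑ m : Fin (n + 1), if (m : ℕ) = 0 then c 0 - x else 0) = c 0 - x := by
      rw [Fin.sum_univ_succ]
      simp
    have hsum_d : ∑ m, d m = E - x := by
      rw [hddef]
      unfold reducedClaims
      rw [Finset.sum_add_distrib, hsum_if, hE, Fin.sum_univ_succ c]
      ring
    have hDpos : 0 < ∑ m, d m := hred'.2.1
    have hone' : (E - x) / (∑ m, d m) = 1 := by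
      rw [hsum_d] at hDpos ⊢
      exact div_self hDpos.ne'
    have hshare : genGeomShare Γ c k.succ = genGeomShare Γ d k := by
      unfold genGeomShare
      by_cases hk : (k : ℕ) = n
      · rw [if_pos (by simp [Fin.val_succ, hk]), if_pos (by simpa using hk)]
        have harg := rGammaNat_shift_arg Γ hb0 hb (k : ℕ)
        have hdk : extendClaims d (k : ℕ) = d k := by
          unfold extendClaims
          rw [dif_pos k.isLt]
        have hck : extendClaims c ((k : ℕ) + 1) = c k.succ := by
          unfold extendClaims
          rw [dif_pos (by omega : (k : ℕ) + 1 < n + 2)]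
          congr 1
        rw [hdk, hck] at harg
        rw [show ((k.succ : Fin (n + 2)) : ℕ) = (k : ℕ) + 1 from Fin.val_succ k]
        exact harg.symm
      · rw [if_neg (by simp [Fin.val_succ]; omega), if_neg (by simpa using hk)]
        rw [show ((k.succ : Fin (n + 2)) : ℕ) = (k : ℕ) + 1 from Fin.val_succ k]
        exact (hr k).symm
    show genGeomShare Γ c k.succ * (E / ∑ m, c m) = genGeomShare Γ d k * ((E - x) / ∑ m, d m)
    rw [hone, hone', mul_one, mul_one, hshare]
  · -- Budget additivity
    intro n c E E' E'' _ _ _ hE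
    funext i
    simp only [genGeomAlloc, hE, add_div, mul_add]
end

section
/- A rule satisfies upstream invariance, equal treatment of equal claims, top consistency and budget additivity if and only if it is the proportional rule φ^P. -/
open Finset

section ProportionalAuxiliary

/-- Additive, nonnegative functions on an interval `[0, C]` are linear. -/
lemma cauchy_interval (f : ℝ → ℝ) (C : ℝ) (hC : 0 < C)
    (hadd : ∀ a b : ℝ, 0 ≤ a → 0 ≤ b → a + b ≤ C → f (a + b) = f a + f b)
    (hnn : ∀ a : ℝ, 0 ≤ a → a ≤ C → 0 ≤ f a) :
    ∀ E, 0 ≤ E → E ≤ C → f E = E / C * f C := by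
  have hf0 : f 0 = 0 := by
    have h := hadd 0 0 le_rfl le_rfl (by linarith)
    rw [add_zero] at h
    linarith
  have hmono : ∀ a b : ℝ, 0 ≤ a → a ≤ b → b ≤ C → f a ≤ f b := by
    intro a b ha hab hbC
    have h1 : a + (b - a) = b := by ring
    have h2 := hadd a (b - a) ha (by linarith) (by linarith)
    rw [h1] at h2
    have h3 := hnn (b - a) (by linarith) (by linarith)
    linarith
  have hnat : ∀ (k : ℕ) (t : ℝ), 0 ≤ t → (k : ℝ) * t ≤ C →
      f ((k : ℝ) * t) = (k : ℝ) * f t := by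
    intro k
    induction k with
    | zero => intro t ht hle; simp [hf0]
    | succ p ihp =>
      intro t ht hle
      push_cast at hle ⊢
      have hexp : ((p : ℝ) + 1) * t = (p : ℝ) * t + t := by ring
      have hpt : (p : ℝ) * t ≤ C := by nlinarith
      have h2 := hadd ((p : ℝ) * t) t (by positivity) ht (by nlinarith)
      rw [hexp, h2, ihp t ht hpt]
      ring
  have hfrac : ∀ p q : ℕ, 0 < q → (p : ℝ) ≤ (q : ℝ) →
      f ((p : ℝ) / (q : ℝ) * C) = (p : ℝ) / (q : ℝ) * f C := by
    intro p q hq hpq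
    have hq' : (0 : ℝ) < (q : ℝ) := by exact_mod_cast hq
    have hCq : 0 ≤ C / (q : ℝ) := by positivity
    have e1 : (q : ℝ) * (C / (q : ℝ)) = C := by field_simp
    have h1 : f C = (q : ℝ) * f (C / (q : ℝ)) := by
      have h := hnat q (C / (q : ℝ)) hCq (le_of_eq e1)
      rw [e1] at h
      exact h
    have e2 : (p : ℝ) * (C / (q : ℝ)) = (p : ℝ) / (q : ℝ) * C := by ring
    have hle2 : (p : ℝ) * (C / (q : ℝ)) ≤ C := by
      calc (p : ℝ) * (C / (q : ℝ)) ≤ (q : ℝ) * (C / (q : ℝ)) :=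
            mul_le_mul_of_nonneg_right hpq hCq
        _ = C := e1
    have h2 := hnat p (C / (q : ℝ)) hCq hle2
    rw [e2] at h2
    have hfCq : f (C / (q : ℝ)) = f C / (q : ℝ) := by
      rw [h1, mul_comm, mul_div_assoc, div_self hq'.ne', mul_one]
    rw [h2, hfCq]
    ring
  have hrat : ∀ r : ℚ, 0 ≤ r → (r : ℝ) ≤ 1 → f ((r : ℝ) * C) = (r : ℝ) * f C := by
    intro r hr0 hr1
    have hd : (0 : ℝ) < ((r.den : ℕ) : ℝ) := by exact_mod_cast r.den_pos
    have hnum0 : 0 ≤ r.num := Rat.num_nonneg.mpr hr0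
    have hcast : (r : ℝ) = ((r.num.toNat : ℕ) : ℝ) / ((r.den : ℕ) : ℝ) := by
      rw [Rat.cast_def]
      congr 1
      exact_mod_cast congrArg (fun (z : ℤ) => (z : ℝ)) (Int.toNat_of_nonneg hnum0).symm
    have hpq : ((r.num.toNat : ℕ) : ℝ) ≤ ((r.den : ℕ) : ℝ) := by
      rw [hcast] at hr1
      have := (div_le_one hd).mp hr1
      exact this
    rw [hcast]
    exact hfrac _ _ r.den_pos hpq
  intro E hE0 hEC
  rcases eq_or_lt_of_le hEC with hEq | hltC
  · rw [hEq, div_self hC.ne']; ring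
  rcases eq_or_lt_of_le hE0 with hE0' | hltE
  · rw [← hE0', hf0]; ring
  have hfCnn : 0 ≤ f C := hnn C hC.le le_rfl
  have hfEnn : 0 ≤ f E := hnn E hE0 hEC
  have hEC1 : E / C < 1 := (div_lt_one hC).mpr hltC
  have hEC0 : 0 < E / C := div_pos hltE hC
  apply le_antisymm
  · by_contra hcon
    push_neg at hcon
    have hfCpos : 0 < f C := by
      rcases eq_or_lt_of_le hfCnn with h | h
      · exfalso
        have hle := hmono E C hE0 hEC le_rfl
        nlinarith
      · exact h
    have hlt : E / C < f E / f C := by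
      rw [lt_div_iff₀ hfCpos]
      linarith
    obtain ⟨r, hr1, hr2⟩ := exists_rat_btwn (lt_min hEC1 hlt)
    have hr1' : E / C < (r : ℝ) := hr1
    have hrlt1 : (r : ℝ) < 1 := lt_of_lt_of_le hr2 (min_le_left _ _)
    have hrltf : (r : ℝ) < f E / f C := lt_of_lt_of_le hr2 (min_le_right _ _)
    have hr0 : (0 : ℚ) ≤ r := by
      have h : (0 : ℝ) < (r : ℝ) := lt_trans hEC0 hr1'
      exact_mod_cast h.le
    have hfr := hrat r hr0 hrlt1.le
    have hErC : E ≤ (r : ℝ) * C := by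
      rw [div_lt_iff₀ hC] at hr1'
      linarith
    have hrCC : (r : ℝ) * C ≤ C := by nlinarith
    have hmono' := hmono E ((r : ℝ) * C) hE0 hErC hrCC
    rw [hfr] at hmono'
    have hfin := (lt_div_iff₀ hfCpos).mp hrltf
    linarith
  · by_contra hcon
    push_neg at hcon
    have hfCpos : 0 < f C := by
      by_contra h
      push_neg at h
      have hz : f C = 0 := le_antisymm h hfCnn
      rw [hz, mul_zero] at hcon
      linarith
    have hflt : f E / f C < E / C := by
      rw [div_lt_iff₀ hfCpos]
      linarith
    have h0le : (0 : ℝ) ≤ f E / f C := div_nonneg hfEnn hfCnn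
    obtain ⟨r, hr1, hr2⟩ := exists_rat_btwn hflt
    have hr0 : (0 : ℚ) ≤ r := by
      have h : (0 : ℝ) ≤ (r : ℝ) := le_of_lt (lt_of_le_of_lt h0le hr1)
      exact_mod_cast h
    have hr1R : (r : ℝ) ≤ 1 := by
      have h : (r : ℝ) < E / C := hr2
      linarith
    have hfr := hrat r hr0 hr1R
    have hrCE : (r : ℝ) * C ≤ E := by
      have := (lt_div_iff₀ hC).mp hr2
      linarith
    have hr0R : (0 : ℝ) ≤ (r : ℝ) := by exact_mod_cast hr0
    have hmono' := hmono ((r : ℝ) * C) E (by positivity) hrCE hEC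
    rw [hfr] at hmono'
    have hfin := (div_lt_iff₀ hfCpos).mp hr1
    linarith

/-- Symmetric form of upstream invariance. -/
lemma UI_symm {φ : RuleFun} (hUI : UpstreamInvariant φ) {n : ℕ} (c d : Fin n → ℝ)
    (hc : IsRedistribution c (∑ i, c i)) (hd : IsRedistribution d (∑ i, d i))
    (i : Fin n) (hdiff : ∀ j, j ≠ i → c j = d j) (k : Fin n) (hk : k < i) :
    φ n c (∑ i, c i) k = φ n d (∑ i, d i) k := by
  rcases lt_trichotomy (c i) (d i) with h | h | h
  · exact hUI n c d hc hd i h hdiff k hk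
  · have hcd : c = d := by
      funext j
      by_cases hj : j = i
      · rw [hj]; exact h
      · exact hdiff j hj
    rw [hcd]
  · exact (hUI n d c hd hc i h (fun j hj => (hdiff j hj).symm) k hk).symm

lemma mkRedis {n : ℕ} {c : Fin n → ℝ} (hnn : ∀ i, 0 ≤ c i) (hpos : 0 < ∑ i, c i) :
    IsRedistribution c (∑ i, c i) :=
  ⟨⟨hnn, hpos, hpos.le, le_refl _⟩, rfl⟩

/-- In a redistribution problem whose most upstream agent has a positive claim, that
agent is awarded exactly its claim. -/
lemma lemA {φ : RuleFun} (hφ : IsRule φ) (hUI : UpstreamInvariant φ)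
    (hET : EqualTreatmentOfEqualClaims φ) {n : ℕ} (c : Fin (n + 1) → ℝ)
    (hnn : ∀ i, 0 ≤ c i) (h0 : 0 < c 0) :
    φ (n + 1) c (∑ i, c i) 0 = c 0 := by
  set g : ℕ → Fin (n + 1) → ℝ := fun m i => if (i : ℕ) < m then c 0 else c i with hg
  have hg0 : ∀ m, g m 0 = c 0 := by
    intro m
    simp only [hg, Fin.val_zero]
    split_ifs <;> simp [*]
  have hgnn : ∀ m i, 0 ≤ g m i := by
    intro m i
    simp only [hg]
    split_ifs
    · exact h0.le
    · exact hnn i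
  have hgpos : ∀ m, 0 < ∑ i, g m i := by
    intro m
    calc (0 : ℝ) < c 0 := h0
      _ = g m 0 := (hg0 m).symm
      _ ≤ ∑ i, g m i := Finset.single_le_sum (fun i _ => hgnn m i) (Finset.mem_univ 0)
  have hstep : ∀ m : ℕ, 1 ≤ m → m ≤ n →
      φ (n + 1) (g (m + 1)) (∑ i, g (m + 1) i) 0 = φ (n + 1) (g m) (∑ i, g m i) 0 := by
    intro m h1 hmn
    have hmlt : m < n + 1 := by omega
    refine (UI_symm hUI (g m) (g (m + 1)) (mkRedis (hgnn m) (hgpos m))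
      (mkRedis (hgnn (m + 1)) (hgpos (m + 1))) ⟨m, hmlt⟩ ?_ 0 ?_).symm
    · intro j hj
      have hjm : (j : ℕ) ≠ m := fun hc' => hj (Fin.ext hc')
      simp only [hg]
      split_ifs <;> first | rfl | omega
    · rw [Fin.lt_def]
      simp only [Fin.val_zero, Fin.val_mk]; omega
  have hmain : ∀ m : ℕ, 1 ≤ m → m ≤ n + 1 →
      φ (n + 1) (g m) (∑ i, g m i) 0 = φ (n + 1) (g 1) (∑ i, g 1 i) 0 := by
    intro m
    induction m with
    | zero => omega
    | succ k ih =>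
      intro _ hk
      rcases Nat.lt_or_ge k 1 with h | h
      · have hk1 : k + 1 = 1 := by omega
        rw [hk1]
      · rw [hstep k h (by omega)]
        exact ih h (by omega)
  have hg1 : g 1 = c := by
    funext i
    simp only [hg]
    split_ifs with h
    · have hi : i = 0 := Fin.ext (by simp only [Fin.val_zero]; omega)
      rw [hi]
    · rfl
  have hgc : ∀ i : Fin (n + 1), g (n + 1) i = c 0 := by
    intro i
    simp only [hg]
    rw [if_pos i.isLt]
  have hprob : IsProblem (g (n + 1)) (∑ i, g (n + 1) i) :=
    (mkRedis (hgnn (n + 1)) (hgpos (n + 1))).1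
  have heq : ∀ i : Fin (n + 1),
      φ (n + 1) (g (n + 1)) (∑ i, g (n + 1) i) i
        = φ (n + 1) (g (n + 1)) (∑ i, g (n + 1) i) 0 :=
    fun i => hET (n + 1) (g (n + 1)) _ hprob i 0 (by rw [hgc i, hgc 0])
  have hsum := (hφ (n + 1) (g (n + 1)) _ hprob).2
  have hsumg : ∑ i, g (n + 1) i = ((n : ℝ) + 1) * c 0 := by
    rw [Finset.sum_congr rfl (fun i _ => hgc i), Finset.sum_const, Finset.card_univ,
      Fintype.card_fin, nsmul_eq_mul]
    push_cast
    ring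
  have hsumφ : ∑ i, φ (n + 1) (g (n + 1)) (∑ i, g (n + 1) i) i
      = ((n : ℝ) + 1) * φ (n + 1) (g (n + 1)) (∑ i, g (n + 1) i) 0 := by
    rw [Finset.sum_congr rfl (fun i _ => heq i), Finset.sum_const, Finset.card_univ,
      Fintype.card_fin, nsmul_eq_mul]
    push_cast
    ring
  have hne : ((n : ℝ) + 1) ≠ 0 := by positivity
  have hphi0 : φ (n + 1) (g (n + 1)) (∑ i, g (n + 1) i) 0 = c 0 := by
    apply mul_left_cancel₀ hne
    rw [← hsumφ, hsum, hsumg]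
  calc φ (n + 1) c (∑ i, c i) 0
      = φ (n + 1) (g 1) (∑ i, g 1 i) 0 := by rw [hg1]
    _ = φ (n + 1) (g (n + 1)) (∑ i, g (n + 1) i) 0 := (hmain (n + 1) (by omega) le_rfl).symm
    _ = c 0 := hphi0

/-- In a redistribution problem whose most upstream agent has a zero claim, that
agent is awarded nothing. -/
lemma lemA0 {φ : RuleFun} (hφ : IsRule φ) (hUI : UpstreamInvariant φ)
    (hET : EqualTreatmentOfEqualClaims φ) (hTC : TopConsistent φ)
    {n : ℕ} (c : Fin (n + 1) → ℝ) (hnn : ∀ i, 0 ≤ c i) (hpos : 0 < ∑ i, c i)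
    (h0 : c 0 = 0) :
    φ (n + 1) c (∑ i, c i) 0 = 0 := by
  set cc : Fin (n + 2) → ℝ := Fin.cons 1 c with hcc
  have hcc0 : cc 0 = 1 := by simp [hcc]
  have hccsucc : ∀ k : Fin (n + 1), cc k.succ = c k := by
    intro k; simp [hcc]
  have hccnn : ∀ i, 0 ≤ cc i := by
    intro i
    cases i using Fin.cases with
    | zero => rw [hcc0]; norm_num
    | succ k => rw [hccsucc k]; exact hnn k
  have hccsum : ∑ i, cc i = 1 + ∑ i, c i := by
    rw [hcc, Fin.sum_cons]
  have hccpos : 0 < ∑ i, cc i := by rw [hccsum]; linarith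
  have hx : φ (n + 2) cc (∑ i, cc i) 0 = 1 := by
    have h := lemA hφ hUI hET cc hccnn (by rw [hcc0]; norm_num)
    rw [hcc0] at h
    exact h
  -- morph all claims of agents ≥ 2 to zero, keeping the award of agent 1
  set v : ℕ → Fin (n + 2) → ℝ :=
    fun m i => if 2 ≤ (i : ℕ) ∧ (i : ℕ) < m then 0 else cc i with hv
  have hv0 : ∀ m, v m 0 = cc 0 := by
    intro m
    simp only [hv, Fin.val_zero]
    simp
  have hvnn : ∀ m i, 0 ≤ v m i := by
    intro m i
    simp only [hv]
    split_ifs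
    · exact le_rfl
    · exact hccnn i
  have hvpos : ∀ m, 0 < ∑ i, v m i := by
    intro m
    calc (0 : ℝ) < 1 := one_pos
      _ = v m 0 := by rw [hv0 m, hcc0]
      _ ≤ ∑ i, v m i := Finset.single_le_sum (fun i _ => hvnn m i) (Finset.mem_univ 0)
  have hstep : ∀ m : ℕ, 2 ≤ m → m ≤ n + 1 →
      φ (n + 2) (v (m + 1)) (∑ i, v (m + 1) i) 1 = φ (n + 2) (v m) (∑ i, v m i) 1 := by
    intro m h2 hmn
    have hmlt : m < n + 2 := by omega
    refine (UI_symm hUI (v m) (v (m + 1)) (mkRedis (hvnn m) (hvpos m))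
      (mkRedis (hvnn (m + 1)) (hvpos (m + 1))) ⟨m, hmlt⟩ ?_ 1 ?_).symm
    · intro j hj
      have hjm : (j : ℕ) ≠ m := fun hc' => hj (Fin.ext hc')
      simp only [hv]
      split_ifs <;> first | rfl | omega
    · rw [Fin.lt_def]
      simp only [Fin.val_one]
      omega
  have hmain : ∀ m : ℕ, 2 ≤ m → m ≤ n + 2 →
      φ (n + 2) (v m) (∑ i, v m i) 1 = φ (n + 2) (v 2) (∑ i, v 2 i) 1 := by
    intro m
    induction m with
    | zero => omega
    | succ k ih =>
      intro _ hk
      rcases Nat.lt_or_ge k 2 with h | h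
      · have hk2 : k + 1 = 2 := by omega
        rw [hk2]
      · rw [hstep k h (by omega)]
        exact ih h (by omega)
  have hv2 : v 2 = cc := by
    funext i
    simp only [hv]
    rw [if_neg (by omega)]
  have hvfin : ∀ k : Fin (n + 1), v (n + 2) k.succ = 0 := by
    intro k
    by_cases hk : (k : ℕ) = 0
    · have hne : ¬(2 ≤ (k.succ : ℕ) ∧ (k.succ : ℕ) < n + 2) := by
        rw [Fin.val_succ]
        omega
      have h1 : v (n + 2) k.succ = cc k.succ := by
        simp only [hv]
        rw [if_neg hne]
      rw [h1, hccsucc k]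
      have hk0 : k = 0 := Fin.ext hk
      rw [hk0]
      exact h0
    · simp only [hv]
      rw [if_pos]
      rw [Fin.val_succ]
      constructor
      · omega
      · exact Nat.succ_lt_succ k.isLt
  have hvsum : ∑ i, v (n + 2) i = 1 := by
    rw [Fin.sum_univ_succ]
    rw [hv0, hcc0]
    rw [Finset.sum_eq_zero (fun k _ => hvfin k)]
    ring
  have hvprob : IsProblem (v (n + 2)) (∑ i, v (n + 2) i) :=
    (mkRedis (hvnn (n + 2)) (hvpos (n + 2))).1
  have hv0award : φ (n + 2) (v (n + 2)) (∑ i, v (n + 2) i) 0 = 1 := by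
    have h := lemA hφ hUI hET (v (n + 2)) (hvnn (n + 2))
      (by rw [hv0, hcc0]; norm_num)
    rw [hv0, hcc0] at h
    exact h
  have hsumφ := (hφ (n + 2) (v (n + 2)) _ hvprob).2
  have hφnn := (hφ (n + 2) (v (n + 2)) _ hvprob).1
  have htail : ∑ k : Fin (n + 1), φ (n + 2) (v (n + 2)) (∑ i, v (n + 2) i) k.succ = 0 := by
    have hsplit := Fin.sum_univ_succ (fun j => φ (n + 2) (v (n + 2)) (∑ i, v (n + 2) i) j)
    rw [hsplit] at hsumφ
    linarith [hv0award, hvsum]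
  have hφ1v : φ (n + 2) (v (n + 2)) (∑ i, v (n + 2) i) 1 = 0 := by
    have h := (Finset.sum_eq_zero_iff_of_nonneg
      (fun k _ => hφnn (Fin.succ k))).mp htail 0 (Finset.mem_univ 0)
    rw [← Fin.succ_zero_eq_one]
    exact h
  have hφ1 : φ (n + 2) cc (∑ i, cc i) 1 = 0 := by
    rw [← hv2]
    rw [← hmain (n + 2) (by omega) le_rfl]
    exact hφ1v
  -- top consistency
  have hred : IsRedistribution cc (∑ i, cc i) := mkRedis hccnn hccpos
  have hredc : reducedClaims cc 1 = c := by
    funext k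
    simp only [reducedClaims]
    rw [hccsucc k, hcc0]
    split_ifs <;> ring
  have hE1 : ∑ i, cc i - 1 = ∑ i, c i := by rw [hccsum]; ring
  have hprob' : IsProblem (reducedClaims cc (φ (n + 2) cc (∑ i, cc i) 0))
      (∑ i, cc i - φ (n + 2) cc (∑ i, cc i) 0) := by
    rw [hx, hredc, hE1]
    exact ⟨hnn, hpos, hpos.le, le_refl _⟩
  have key := hTC n cc (∑ i, cc i) hred (by rw [hx, hcc0]) hprob' 0
  rw [hx, hredc, hE1, Fin.succ_zero_eq_one] at key
  rw [← key]
  exact hφ1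

/-- In every redistribution problem, every agent is awarded exactly its claim. -/
lemma lemB {φ : RuleFun} (hφ : IsRule φ) (hUI : UpstreamInvariant φ)
    (hET : EqualTreatmentOfEqualClaims φ) (hTC : TopConsistent φ) :
    ∀ (n : ℕ) (c : Fin (n + 1) → ℝ), (∀ i, 0 ≤ c i) → (0 < ∑ i, c i) →
      ∀ i, φ (n + 1) c (∑ i, c i) i = c i := by
  intro n
  induction n with
  | zero =>
    intro c hnn hpos i
    have hsum := (hφ 1 c (∑ i, c i) ⟨hnn, hpos, hpos.le, le_refl _⟩).2
    have hi : i = 0 := Fin.ext (by simp only [Fin.val_zero]; omega)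
    rw [hi]
    have h1 : φ 1 c (∑ i, c i) 0 = ∑ j : Fin 1, φ 1 c (∑ i, c i) j :=
      (Fin.sum_univ_one _).symm
    rw [h1, hsum, Fin.sum_univ_one]
  | succ m ih =>
    intro c hnn hpos i
    have h0 : φ (m + 2) c (∑ j, c j) 0 = c 0 := by
      rcases eq_or_lt_of_le (hnn 0) with h | h
      · rw [← h]
        exact lemA0 hφ hUI hET hTC c hnn hpos h.symm
      · exact lemA hφ hUI hET c hnn h
    have hprob : IsProblem c (∑ j, c j) := ⟨hnn, hpos, hpos.le, le_refl _⟩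
    have hsumsplit : ∑ j, c j = c 0 + ∑ k : Fin (m + 1), c k.succ := Fin.sum_univ_succ c
    have hsumφ := (hφ (m + 2) c (∑ j, c j) hprob).2
    have hφnn := (hφ (m + 2) c (∑ j, c j) hprob).1
    have htnn : (0 : ℝ) ≤ ∑ k : Fin (m + 1), c k.succ :=
      Finset.sum_nonneg (fun k _ => hnn k.succ)
    rcases eq_or_lt_of_le htnn with hz | hp
    · -- all downstream claims are zero
      have htail0 : ∀ k : Fin (m + 1), c k.succ = 0 := fun k =>
        (Finset.sum_eq_zero_iff_of_nonneg (fun k _ => hnn (Fin.succ k))).mp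
          hz.symm k (Finset.mem_univ k)
      have hφt0 : ∀ k : Fin (m + 1), φ (m + 2) c (∑ j, c j) k.succ = 0 := by
        have h1 : ∑ k : Fin (m + 1), φ (m + 2) c (∑ j, c j) k.succ = 0 := by
          have hsplit := Fin.sum_univ_succ (fun j => φ (m + 2) c (∑ j, c j) j)
          rw [hsplit] at hsumφ
          linarith
        exact fun k => (Finset.sum_eq_zero_iff_of_nonneg
          (fun k _ => hφnn (Fin.succ k))).mp h1 k (Finset.mem_univ k)
      cases i using Fin.cases with
      | zero => exact h0
      | succ k => rw [hφt0 k, htail0 k]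
    · -- reduce via top consistency and apply the induction hypothesis
      have hbud : ∑ j, c j - φ (m + 2) c (∑ j, c j) 0 = ∑ k : Fin (m + 1), c k.succ := by
        rw [h0]
        linarith
      have hredc : reducedClaims c (φ (m + 2) c (∑ j, c j) 0)
          = fun k : Fin (m + 1) => c k.succ := by
        funext k
        simp only [reducedClaims, h0]
        split_ifs <;> ring
      have hprob' : IsProblem (reducedClaims c (φ (m + 2) c (∑ j, c j) 0))
          (∑ j, c j - φ (m + 2) c (∑ j, c j) 0) := by
        rw [hredc, hbud]
        exact ⟨fun k => hnn k.succ, hp, hp.le, le_refl _⟩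
      have key := hTC m c (∑ j, c j) (mkRedis hnn hpos) (by rw [h0]) hprob'
      cases i using Fin.cases with
      | zero => exact h0
      | succ k =>
        have hkey := key k
        rw [hredc, hbud] at hkey
        rw [hkey]
        exact ih (fun k => c k.succ) (fun k => hnn k.succ) hp k

end ProportionalAuxiliary

/-- Theorem 3: a rule satisfies upstream invariance, equal treatment of
equal claims, top consistency and budget additivity iff it is the proportional rule. -/
theorem proportional_characterization (φ : RuleFun) (hφ : IsRule φ) :
    (UpstreamInvariant φ ∧ EqualTreatmentOfEqualClaims φ ∧
        TopConsistent φ ∧ BudgetAdditive φ) ↔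
      ∀ (n : ℕ) (c : Fin n → ℝ) (E : ℝ), IsProblem c E → φ n c E = propAlloc n c E := by
  constructor
  · rintro ⟨hUI, hET, hTC, hBA⟩
    intro n
    cases n with
    | zero =>
      intro c E hprob
      exfalso
      simpa using hprob.2.1
    | succ m =>
      intro c E hprob
      obtain ⟨hnn, hpos, hE0, hEC⟩ := hprob
      funext i
      have hadd : ∀ a b : ℝ, 0 ≤ a → 0 ≤ b → a + b ≤ ∑ j, c j →
          φ (m + 1) c (a + b) i = φ (m + 1) c a i + φ (m + 1) c b i := by
        intro a b ha hb hab
        have h := hBA (m + 1) c (a + b) a b ⟨hnn, hpos, by linarith, hab⟩ ha hb rfl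
        exact congrFun h i
      have hnn' : ∀ a : ℝ, 0 ≤ a → a ≤ ∑ j, c j → 0 ≤ φ (m + 1) c a i :=
        fun a ha haC => (hφ (m + 1) c a ⟨hnn, hpos, ha, haC⟩).1 i
      have hcau : φ (m + 1) c E i
          = E / (∑ j, c j) * φ (m + 1) c (∑ j, c j) i :=
        cauchy_interval (fun E => φ (m + 1) c E i) (∑ j, c j) hpos hadd hnn' E hE0 hEC
      have hfC : φ (m + 1) c (∑ j, c j) i = c i := lemB hφ hUI hET hTC m c hnn hpos i
      rw [hcau, hfC]
      simp only [propAlloc]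
      ring
  · intro hprop
    refine ⟨?_, ?_, ?_, ?_⟩
    · -- upstream invariance
      intro n c d hc hd i hci hdiff k hk
      rw [hprop n c _ hc.1, hprop n d _ hd.1]
      simp only [propAlloc]
      rw [div_self hc.1.2.1.ne', div_self hd.1.2.1.ne', mul_one, mul_one]
      exact hdiff k (ne_of_lt hk)
    · -- equal treatment of equal claims
      intro n c E hprob i j hij
      rw [hprop n c E hprob]
      simp only [propAlloc, hij]
    · -- top consistency
      intro n c E hred hle hprob' k
      have hc := hred.1
      have hE : E = ∑ j, c j := hred.2
      have h0 : φ (n + 2) c E 0 = c 0 := by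
        rw [hprop _ _ _ hc]
        simp only [propAlloc]
        rw [hE, div_self hc.2.1.ne', mul_one]
      have hredc : reducedClaims c (c 0) = fun k : Fin (n + 1) => c k.succ := by
        funext k
        simp only [reducedClaims]
        split_ifs <;> ring
      have hT : ∑ j : Fin (n + 1), c j.succ = E - c 0 := by
        have h := Fin.sum_univ_succ c
        rw [hE, h]
        ring
      have hpos' : 0 < E - c 0 := by
        have h := hprob'.2.1
        rw [h0, hredc] at h
        have h3 : (0 : ℝ) < ∑ k : Fin (n + 1), c k.succ := h
        rw [hT] at h3
        exact h3
      have hprob2 : IsProblem (reducedClaims c (c 0)) (E - c 0) := by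
        rw [← h0]; exact hprob'
      rw [h0, hprop _ _ _ hc, hprop _ _ _ hprob2, hredc]
      simp only [propAlloc]
      have h1 : E / ∑ j, c j = 1 := by rw [hE]; exact div_self hc.2.1.ne'
      have h2 : ∑ j : Fin (n + 1), c j.succ = E - c 0 := hT
      rw [h1, h2, div_self hpos'.ne']
    · -- budget additivity
      intro n c E E' E'' hprob hE' hE'' hsplit
      have hprob' : IsProblem c E' :=
        ⟨hprob.1, hprob.2.1, hE', by linarith [hprob.2.2.2]⟩
      have hprob'' : IsProblem c E'' :=
        ⟨hprob.1, hprob.2.1, hE'', by linarith [hprob.2.2.2]⟩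
      rw [hprop _ _ _ hprob, hprop _ _ _ hprob', hprop _ _ _ hprob'']
      funext i
      simp only [propAlloc]
      rw [hsplit]
      ring
end
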